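/- arXiv:1801.07120 — 12 statements merged into one kernel-verified Lean document; each statement's English description precedes it below -/
import Mathlib

section
/- Let n be a positive integer and a, b integers. The linear congruence a·x ≡ b (mod n) admits a solution x with gcd(x, n) = 1 if and only if gcd(a, n) = gcd(b, n). -/
/-!
Both sides say that `a` and `b` are associated in `ZMod n`: an integer coprime to `n` is exactly a
lift of a unit of `ZMod n`, and every residue `a` is associated to `gcd(a, n)` because it is a unit
times a divisor of `n`.
-/

namespace ZMod

theorem isUnit_intCast_iff_gcd_eq_one {n : ℕ} (x : ℤ) :
    IsUnit (x : ZMod n) ↔ Int.gcd x n = 1 := by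
  rw [coe_int_isUnit_iff_isCoprime, Int.isCoprime_iff_gcd_eq_one, Int.gcd_comm]

/-- Reducing modulo `gcd(a, n)` kills `a`, hence every multiple of `a` in `ZMod n`. -/
theorem gcd_dvd_gcd_of_intCast_dvd {n : ℕ} {a b : ℤ} (h : (a : ZMod n) ∣ (b : ZMod n)) :
    Int.gcd a n ∣ Int.gcd b n := by
  set d := Int.gcd a n
  have hdn : d ∣ n := Int.natCast_dvd_natCast.mp (Int.gcd_dvd_right a n)
  have hda : ((a : ZMod n).cast : ZMod d) = 0 := by
    rw [cast_intCast hdn, intCast_zmod_eq_zero_iff_dvd]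
    exact Int.gcd_dvd_left a n
  have hdb : (d : ℤ) ∣ b := by
    obtain ⟨c, hc⟩ := h
    rw [← intCast_zmod_eq_zero_iff_dvd, ← cast_intCast hdn, hc, cast_mul hdn, hda, zero_mul]
  exact Int.dvd_gcd hdb (Int.gcd_dvd_right a n)

theorem gcd_eq_of_associated_intCast {n : ℕ} {a b : ℤ}
    (h : Associated (a : ZMod n) (b : ZMod n)) :
    Int.gcd a n = Int.gcd b n :=
  Nat.dvd_antisymm (gcd_dvd_gcd_of_intCast_dvd h.dvd) (gcd_dvd_gcd_of_intCast_dvd h.dvd')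

theorem associated_intCast_gcd {n : ℕ} (a : ℤ) :
    Associated (a : ZMod n) ((Int.gcd a n : ℤ) : ZMod n) := by
  obtain ⟨d, hdn, u, hu, ha⟩ := eq_unit_mul_divisor (a : ZMod n)
  have hda : Associated (a : ZMod n) ((d : ℤ) : ZMod n) := by
    rw [ha, Int.cast_natCast]
    exact associated_unit_mul_left _ _ hu
  have hgcd : Int.gcd a n = d := by
    rw [← Nat.gcd_eq_left hdn, ← Int.gcd_natCast_natCast]
    exact gcd_eq_of_associated_intCast hda
  rwa [hgcd]

theorem associated_intCast_iff_gcd_eq {n : ℕ} {a b : ℤ} :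
    Associated (a : ZMod n) (b : ZMod n) ↔ Int.gcd a n = Int.gcd b n :=
  ⟨gcd_eq_of_associated_intCast,
    fun h ↦ (associated_intCast_gcd a).trans (h ▸ (associated_intCast_gcd b).symm)⟩

theorem associated_intCast_iff_exists_coprime_mul_modEq {n : ℕ} {a b : ℤ} :
    Associated (a : ZMod n) (b : ZMod n) ↔
      ∃ x : ℤ, Int.gcd x n = 1 ∧ a * x ≡ b [ZMOD n] := by
  constructor
  · rintro ⟨u, hu⟩
    refine ⟨(u : ZMod n).cast, ?_, ?_⟩
    · rw [← isUnit_intCast_iff_gcd_eq_one, intCast_zmod_cast]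
      exact u.isUnit
    · rw [← intCast_eq_intCast_iff, Int.cast_mul, intCast_zmod_cast, hu]
  · rintro ⟨x, hx, hax⟩
    refine ⟨((isUnit_intCast_iff_gcd_eq_one x).mpr hx).unit, ?_⟩
    rw [IsUnit.unit_spec, ← Int.cast_mul, intCast_eq_intCast_iff]
    exact hax

end ZMod

theorem linear_congruence_coprime_solvable_general (n : ℕ) (a b : ℤ) :
    (∃ x : ℤ, Int.gcd x n = 1 ∧ a * x ≡ b [ZMOD n]) ↔ Int.gcd a n = Int.gcd b n :=
  ZMod.associated_intCast_iff_exists_coprime_mul_modEq.symm.trans ZMod.associated_intCast_iff_gcd_eq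

theorem linear_congruence_coprime_solvable (n : ℕ) (hn : 0 < n) (a b : ℤ) :
    (∃ x : ℤ, Int.gcd x n = 1 ∧ a * x ≡ b [ZMOD n]) ↔ Int.gcd a n = Int.gcd b n :=
  linear_congruence_coprime_solvable_general n a b
end

section
/- Let n be a positive integer, a, b integers with gcd(a, n) = gcd(b, n) = d. Then the number of residue classes x modulo n with gcd(x, n) = 1 and a·x ≡ b (mod n) equals φ(n)/φ(n/d), where φ is Euler's totient function. -/
/-!
Write `a = d a'`, `b = d b'`, `n = d m`; then `a'` and `b'` are units mod `m`, and for `x` coprime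
to `n` the congruence `a x ≡ b (mod n)` says exactly that the reduction of `x` mod `m` is the unit
`a'⁻¹ b'`. So the solutions form one fiber of the reduction `(ℤ/n)ˣ → (ℤ/m)ˣ`, a surjective group
homomorphism, and every fiber has `φ(n) / φ(m)` elements.
-/

open Finset

theorem MonoidHom.card_filter_eq_of_surjective {G H : Type*} [Group G] [Fintype G] [Group H]
    [Fintype H] [DecidableEq H] {f : G →* H} (hf : Function.Surjective f) (h : H) :
    #{g | f g = h} = Fintype.card G / Fintype.card H := by
  classical
  have hfiber : #{g | f g = h} = Nat.card f.ker := by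
    rw [← Nat.card_congr (fiberEquivKerOfSurjective hf h), Nat.card_eq_card_toFinset]
    congr 1
    ext
    simp
  have hcard : Nat.card f.ker * Fintype.card H = Fintype.card G := by
    rw [← Nat.card_eq_fintype_card, ← Nat.card_eq_fintype_card, ← Subgroup.card_top (G := H),
      ← range_eq_top.mpr hf, ← Subgroup.index_ker, Subgroup.card_mul_index]
  rw [hfiber, ← hcard, Nat.mul_div_cancel _ Fintype.card_pos]

theorem ZMod.card_filter_range_coprime_eq_card_units (n : ℕ) [NeZero n] (p : ZMod n → Prop)
    [DecidablePred p] :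
    #((range n).filter fun x : ℕ => x.Coprime n ∧ p x) = #{u : (ZMod n)ˣ | p u} := by
  symm
  refine card_bij (fun u _ => (u : ZMod n).val) ?_ ?_ ?_
  · intro u hu
    simp only [mem_filter, mem_univ, true_and] at hu ⊢
    exact ⟨mem_range.mpr (ZMod.val_lt _), ZMod.val_coe_unit_coprime u, by simpa using hu⟩
  · intro u _ v _ huv
    exact Units.ext (ZMod.val_injective n huv)
  · intro x hx
    rw [mem_filter, mem_range] at hx
    obtain ⟨hxn, hcop, hp⟩ := hx
    exact ⟨ZMod.unitOfCoprime x hcop, by simpa using hp, by simp [ZMod.val_cast_of_lt hxn]⟩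

theorem Int.modEq_iff_zmod_ediv {a b : ℤ} {n d : ℕ} (hd : d ≠ 0) (ha : (d : ℤ) ∣ a)
    (hb : (d : ℤ) ∣ b) (hn : d ∣ n) :
    a ≡ b [ZMOD n] ↔ ((a / d : ℤ) : ZMod (n / d)) = ((b / d : ℤ) : ZMod (n / d)) := by
  obtain ⟨a, rfl⟩ := ha
  obtain ⟨b, rfl⟩ := hb
  obtain ⟨m, rfl⟩ := hn
  have hd' : (d : ℤ) ≠ 0 := by exact_mod_cast hd
  rw [Int.mul_ediv_cancel_left _ hd', Int.mul_ediv_cancel_left _ hd',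
    Nat.mul_div_cancel_left _ (Nat.pos_of_ne_zero hd), ZMod.intCast_eq_intCast_iff, Nat.cast_mul,
    Int.ModEq.mul_left_cancel_iff' hd']

theorem ZMod.isUnit_intCast_ediv_gcd (a : ℤ) {n : ℕ} (hn : n ≠ 0) :
    IsUnit ((a / a.gcd n : ℤ) : ZMod (n / a.gcd n)) := by
  have hcop := Int.gcd_div_gcd_div_gcd (i := a) (j := n)
    (Int.gcd_pos_of_ne_zero_right _ (by exact_mod_cast hn))
  refine (ZMod.unitOfIsCoprime _ ?_).isUnit
  rw [Int.isCoprime_iff_gcd_eq_one]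
  push_cast
  exact hcop

theorem ZMod.card_units_filter_mul_castHom_eq {m n : ℕ} [NeZero n] (hmn : m ∣ n)
    (α β : (ZMod m)ˣ) :
    #{u : (ZMod n)ˣ | (α : ZMod m) * ZMod.castHom hmn _ u = β} = n.totient / m.totient := by
  have : NeZero m := ⟨fun hm => NeZero.ne n (Nat.eq_zero_of_zero_dvd (hm ▸ hmn))⟩
  have hfiber (u : (ZMod n)ˣ) :
      (α : ZMod m) * ZMod.castHom hmn _ u = β ↔ ZMod.unitsMap hmn u = α⁻¹ * β := by
    rw [eq_inv_mul_iff_mul_eq, Units.ext_iff]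
    rfl
  simp_rw [hfiber]
  rw [MonoidHom.card_filter_eq_of_surjective (ZMod.unitsMap_surjective hmn),
    ZMod.card_units_eq_totient, ZMod.card_units_eq_totient]

theorem linear_congruence_coprime_count (n : ℕ) (hn : 0 < n) (a b : ℤ) (d : ℕ)
    (ha : Int.gcd a n = d) (hb : Int.gcd b n = d) :
    ((Finset.range n).filter
      (fun x => Nat.gcd x n = 1 ∧ a * (x : ℤ) % (n : ℤ) = b % (n : ℤ))).card
      = Nat.totient n / Nat.totient (n / d) := by
  have : NeZero n := ⟨hn.ne'⟩
  have hdn : d ∣ n := by simpa [ha] using Int.gcd_dvd_natAbs_right a n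
  have hd : d ≠ 0 := ha ▸ Int.gcd_ne_zero_right (by exact_mod_cast hn.ne')
  have hda : (d : ℤ) ∣ a := ha ▸ Int.gcd_dvd_left a n
  have hdb : (d : ℤ) ∣ b := hb ▸ Int.gcd_dvd_left b n
  obtain ⟨α, hα⟩ := ha ▸ ZMod.isUnit_intCast_ediv_gcd a hn.ne'
  obtain ⟨β, hβ⟩ := hb ▸ ZMod.isUnit_intCast_ediv_gcd b hn.ne'
  have hmn : n / d ∣ n := Nat.div_dvd_of_dvd hdn
  have hsolution (x : ℕ) :
      a * x % n = b % n ↔ (α : ZMod (n / d)) * ZMod.castHom hmn _ x = β := by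
    have := Int.modEq_iff_zmod_ediv hd (hda.mul_right x) hdb hdn
    rw [Int.mul_ediv_assoc' _ hda, Int.cast_mul, Int.cast_natCast, ← hα, ← hβ] at this
    rwa [map_natCast]
  rw [filter_congr fun x _ => and_congr Nat.coprime_iff_gcd_eq_one.symm (hsolution x),
    ZMod.card_filter_range_coprime_eq_card_units n
      fun y => (α : ZMod (n / d)) * ZMod.castHom hmn _ y = β,
    ZMod.card_units_filter_mul_castHom_eq]
end

section
/- For positive integers m, n, the identity ∑_{i ∣ m} ∑_{j ∣ n} gcd(i, j) = ∑_{t ∣ gcd(m,n)} φ(t) · τ(m/t) · τ(n/t) holds, where τ is the number-of-divisors function and φ is Euler's totient function. -/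
/-!
Since `gcd i j = ∑_{t ∣ gcd i j} φ(t)`, the left-hand side counts each `t ∣ gcd m n` with weight
`φ(t)` once for every pair of divisors `i ∣ m`, `j ∣ n` that are both multiples of `t`; the
multiples of `t` among the divisors of `m` are the `t * k` with `k ∣ m / t`.
-/

open Finset

namespace Nat

theorem card_divisors_filter_dvd {m t : ℕ} (ht : t ∣ m) :
    #{i ∈ m.divisors | t ∣ i} = #(m / t).divisors := by
  rcases eq_or_ne m 0 with rfl | hm
  · simp
  have ht0 : 0 < t := pos_of_dvd_of_pos ht (pos_of_ne_zero hm)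
  refine card_nbij' (· / t) (· * t) ?_ ?_ ?_ ?_
  · rintro i hi
    simp only [mem_coe, mem_filter, mem_divisors] at hi
    obtain ⟨⟨him, -⟩, hti⟩ := hi
    simp only [mem_coe, mem_divisors]
    exact ⟨div_dvd_div hti him, (Nat.div_pos (le_of_dvd (pos_of_ne_zero hm) ht) ht0).ne'⟩
  · rintro k hk
    simp only [mem_coe, mem_divisors] at hk
    simp only [mem_coe, mem_filter, mem_divisors]
    exact ⟨⟨(mul_dvd_mul_right hk.1 t).trans (Nat.div_mul_cancel ht).dvd, hm⟩, dvd_mul_left t k⟩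
  · rintro i hi
    exact Nat.div_mul_cancel (mem_filter.mp hi).2
  · rintro k -
    exact Nat.mul_div_cancel k ht0

theorem gcd_eq_sum_totient_filter {d i j : ℕ} (hd : d ≠ 0) (h : gcd i j ∣ d) :
    gcd i j = ∑ t ∈ d.divisors with t ∣ i ∧ t ∣ j, φ t := by
  simp_rw [← dvd_gcd_iff]
  rw [divisors_filter_dvd_of_dvd hd h, sum_totient]

end Nat

theorem Finset.sum_sum_sum_filter_and {α β γ R : Type*} [CommSemiring R]
    (s : Finset α) (u : Finset β) (D : Finset γ) (p : γ → α → Prop) (q : γ → β → Prop)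
    [∀ t i, Decidable (p t i)] [∀ t j, Decidable (q t j)] (f : γ → R) :
    ∑ i ∈ s, ∑ j ∈ u, ∑ t ∈ D with p t i ∧ q t j, f t
      = ∑ t ∈ D, f t * #{i ∈ s | p t i} * #{j ∈ u | q t j} := by
  calc _ = ∑ i ∈ s, ∑ t ∈ D, ∑ j ∈ u, if p t i ∧ q t j then f t else 0 := by
        simp_rw [sum_filter]
        exact sum_congr rfl fun _ _ => sum_comm
    _ = ∑ t ∈ D, ∑ i ∈ s, ∑ j ∈ u, if p t i ∧ q t j then f t else 0 := sum_comm
    _ = _ := sum_congr rfl fun t _ => by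
        rw [natCast_card_filter, natCast_card_filter, mul_sum s, sum_mul_sum]
        refine sum_congr rfl fun i _ => sum_congr rfl fun j _ => ?_
        by_cases p t i <;> by_cases q t j <;> simp [*]

theorem subgroup_count_identity_general (m n : ℕ) :
    ∑ i ∈ m.divisors, ∑ j ∈ n.divisors, Nat.gcd i j
      = ∑ t ∈ (Nat.gcd m n).divisors,
          Nat.totient t * (m / t).divisors.card * (n / t).divisors.card := by
  calc _ = ∑ i ∈ m.divisors, ∑ j ∈ n.divisors,
          ∑ t ∈ (Nat.gcd m n).divisors with t ∣ i ∧ t ∣ j, Nat.totient t :=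
        sum_congr rfl fun i hi => sum_congr rfl fun j hj =>
          Nat.gcd_eq_sum_totient_filter (Nat.gcd_ne_zero_left (Nat.mem_divisors.1 hi).2) <|
            Nat.dvd_gcd ((Nat.gcd_dvd_left i j).trans (Nat.dvd_of_mem_divisors hi))
              ((Nat.gcd_dvd_right i j).trans (Nat.dvd_of_mem_divisors hj))
    _ = ∑ t ∈ (Nat.gcd m n).divisors,
          Nat.totient t * #{i ∈ m.divisors | t ∣ i} * #{j ∈ n.divisors | t ∣ j} :=
        sum_sum_sum_filter_and ..
    _ = _ := sum_congr rfl fun t ht => by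
        have htd := Nat.dvd_of_mem_divisors ht
        rw [Nat.card_divisors_filter_dvd (htd.trans (Nat.gcd_dvd_left m n)),
          Nat.card_divisors_filter_dvd (htd.trans (Nat.gcd_dvd_right m n))]

theorem subgroup_count_identity (m n : ℕ) (hm : 0 < m) (hn : 0 < n) :
    ∑ i ∈ m.divisors, ∑ j ∈ n.divisors, Nat.gcd i j
      = ∑ t ∈ (Nat.gcd m n).divisors,
          Nat.totient t * (m / t).divisors.card * (n / t).divisors.card :=
  subgroup_count_identity_general m n
end

section
/- For a prime p and integers 1 ≤ α ≤ β, the number of subgroups of ℤ_{p^α} × ℤ_{p^β} equals ((β−α+1)p^{α+2} − (β−α−1)p^{α+1} − (α+β+3)p + (α+β+1)) / (p−1)². -/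
open AddSubgroup

lemma mem_zmul_int {n : ℕ} [NeZero n] {d : ℕ} (hd : d ∣ n) (k : ℤ) :
    ((k : ZMod n) ∈ zmultiples ((d : ZMod n))) ↔ (d : ℤ) ∣ k := by
  constructor
  · rintro ⟨m, hm⟩
    have : ((m * d - k : ℤ) : ZMod n) = 0 := by
      push_cast
      rw [← hm]
      push_cast [zsmul_eq_mul]
      ring
    rw [ZMod.intCast_zmod_eq_zero_iff_dvd] at this
    have hdn : (d : ℤ) ∣ (n : ℤ) := Int.natCast_dvd_natCast.2 hd
    have h1 := hdn.trans this
    have h2 : (d:ℤ) ∣ m * d := Dvd.intro_left m rfl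
    have := dvd_sub h2 h1
    simpa using this
  · rintro ⟨e, rfl⟩
    exact ⟨e, by push_cast [zsmul_eq_mul]; ring⟩

lemma mem_zmul_nat {n : ℕ} [NeZero n] {d : ℕ} (hd : d ∣ n) (x : ZMod n) :
    x ∈ zmultiples ((d : ZMod n)) ↔ d ∣ x.val := by
  have hx : ((x.val : ℤ) : ZMod n) = x := by
    push_cast
    exact ZMod.natCast_rightInverse x
  conv_lhs => rw [← hx]
  rw [mem_zmul_int hd, Int.natCast_dvd_natCast]
open AddSubgroup

lemma zmod_subgroup_classify (p k : ℕ) (hp : p.Prime) (H : AddSubgroup (ZMod (p ^ k))) :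
    ∃ i ≤ k, H = zmultiples (((p : ℕ) ^ i : ℕ) : ZMod (p ^ k)) := by
  have : NeZero (p ^ k) := ⟨pow_ne_zero _ hp.pos.ne'⟩
  set f : ℤ →+ ZMod (p ^ k) := Int.castAddHom (ZMod (p ^ k)) with hf
  have hsurj : Function.Surjective f := ZMod.intCast_surjective
  have hHmc : (H.comap f).map f = H := AddSubgroup.map_comap_eq_self_of_surjective hsurj H
  obtain ⟨a, ha⟩ := Int.subgroup_cyclic (H.comap f)
  rw [← AddSubgroup.zmultiples_eq_closure] at ha
  have hpk : ((p : ℤ) ^ k) ∈ H.comap f := by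
    simp only [AddSubgroup.mem_comap, hf]
    show (((p : ℤ) ^ k : ℤ) : ZMod (p ^ k)) ∈ H
    have : (((p : ℤ) ^ k : ℤ) : ZMod (p ^ k)) = 0 := by
      push_cast
      exact_mod_cast ZMod.natCast_self (p ^ k)
    rw [this]; exact zero_mem H
  rw [ha] at hpk
  obtain ⟨m, hm⟩ := hpk
  have hdvd : a ∣ (p : ℤ) ^ k := Dvd.intro_left m (by rw [← hm]; simp [zsmul_eq_mul])
  have hna : a.natAbs ∣ p ^ k := by
    have h := Int.natAbs_dvd_natAbs.2 hdvd
    rwa [Int.natAbs_pow, Int.natAbs_natCast] at h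
  obtain ⟨i, hik, hieq⟩ := (Nat.dvd_prime_pow hp).1 hna
  refine ⟨i, hik, ?_⟩
  have hza : zmultiples a = zmultiples ((a.natAbs : ℤ)) := by
    rcases Int.natAbs_eq a with h | h
    · rw [← h]
    · rw [h]; ext x
      constructor <;> rintro ⟨n, rfl⟩ <;> exact ⟨-n, by simp⟩
  rw [← hHmc, ha, hza, hieq, AddMonoidHom.map_zmultiples]
  congr 1
  simp only [hf, Int.coe_castAddHom]
  push_cast
  ring
open AddSubgroup

lemma card_zmul_pow (p k i : ℕ) (hp : p.Prime) (hik : i ≤ k) :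
    Nat.card (zmultiples ((p ^ i : ℕ) : ZMod (p ^ k))) = p ^ (k - i) := by
  rw [Nat.card_zmultiples, ZMod.addOrderOf_coe _ (pow_ne_zero _ hp.pos.ne'),
    Nat.gcd_eq_right (pow_dvd_pow p hik), Nat.pow_div hik hp.pos]

lemma zmul_pow_inj (p k : ℕ) (hp : p.Prime) {i i' : ℕ} (hik : i ≤ k) (hik' : i' ≤ k)
    (h : zmultiples ((p ^ i : ℕ) : ZMod (p ^ k)) = zmultiples ((p ^ i' : ℕ) : ZMod (p ^ k))) :
    i = i' := by
  have := congrArg (Nat.card ∘ fun H : AddSubgroup (ZMod (p ^ k)) => H) h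
  simp only [Function.comp] at this
  rw [card_zmul_pow p k i hp hik, card_zmul_pow p k i' hp hik'] at this
  have := Nat.pow_right_injective hp.two_le this
  omega

def psiSub (p α β i j c : ℕ) : AddSubgroup (ZMod (p ^ α) × ZMod (p ^ β)) :=
  closure {(((p ^ i : ℕ) : ZMod (p ^ α)), 0),
    (((c * p ^ (i - min i (β - j)) : ℕ) : ZMod (p ^ α)), ((p ^ j : ℕ) : ZMod (p ^ β)))}

lemma mem_psiSub {p α β i j c : ℕ} (z : ZMod (p ^ α) × ZMod (p ^ β)) :
    z ∈ psiSub p α β i j c ↔ ∃ s t : ℤ,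
      s • ((((p ^ i : ℕ) : ZMod (p ^ α)), (0 : ZMod (p ^ β))))
        + t • ((((c * p ^ (i - min i (β - j)) : ℕ) : ZMod (p ^ α)), ((p ^ j : ℕ) : ZMod (p ^ β)))) = z := by
  rw [psiSub, AddSubgroup.mem_closure_pair]

lemma addOrderOf_pow_zmod (p k i : ℕ) (hp : p.Prime) (hik : i ≤ k) :
    addOrderOf ((p ^ i : ℕ) : ZMod (p ^ k)) = p ^ (k - i) := by
  rw [ZMod.addOrderOf_coe _ (pow_ne_zero _ hp.pos.ne'),
    Nat.gcd_eq_right (pow_dvd_pow p hik), Nat.pow_div hik hp.pos]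

lemma psi_map_snd (p α β i j c : ℕ) :
    (psiSub p α β i j c).map (AddMonoidHom.snd (ZMod (p ^ α)) (ZMod (p ^ β)))
      = zmultiples ((p ^ j : ℕ) : ZMod (p ^ β)) := by
  ext y
  simp only [AddSubgroup.mem_map, mem_psiSub, mem_zmultiples_iff]
  constructor
  · rintro ⟨z, ⟨s, t, rfl⟩, rfl⟩
    exact ⟨t, by simp⟩
  · rintro ⟨t, rfl⟩
    exact ⟨_, ⟨0, t, rfl⟩, by simp⟩

lemma psi_comap_inl (p α β i j c : ℕ) (hp : p.Prime) (hi : i ≤ α) (hj : j ≤ β) :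
    (psiSub p α β i j c).comap (AddMonoidHom.inl (ZMod (p ^ α)) (ZMod (p ^ β)))
      = zmultiples ((p ^ i : ℕ) : ZMod (p ^ α)) := by
  have hm1 : min i (β - j) ≤ i := min_le_left _ _
  have hm2 : min i (β - j) ≤ β - j := min_le_right _ _
  ext u
  simp only [AddSubgroup.mem_comap, mem_psiSub, mem_zmultiples_iff]
  constructor
  · rintro ⟨s, t, h⟩
    rw [Prod.ext_iff] at h
    obtain ⟨h1, h2⟩ := h
    simp only [Prod.fst_add, Prod.snd_add, Prod.smul_fst, Prod.smul_snd, smul_zero,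
      zero_add, AddMonoidHom.inl_apply] at h1 h2
    -- h2 : t • ((p^j : ℕ) : ZMod (p^β)) = 0
    have hdvd : ((p ^ (β - j) : ℕ) : ℤ) ∣ t := by
      rw [← addOrderOf_pow_zmod p β j hp hj] at *
      exact addOrderOf_dvd_iff_zsmul_eq_zero.2 h2
    obtain ⟨t', rfl⟩ := hdvd
    refine ⟨s + t' * (c * p ^ (β - j - min i (β - j))), ?_⟩
    rw [← h1]
    have e1 : (β - j - min i (β - j)) + i = (β - j) + (i - min i (β - j)) := by omega
    have e2 : ((p:ZMod (p^α)) ^ (β - j - min i (β - j))) * (p:ZMod (p^α)) ^ i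
        = ((p:ZMod (p^α)) ^ (β - j)) * (p:ZMod (p^α)) ^ (i - min i (β - j)) := by
      rw [← pow_add, ← pow_add, e1]
    push_cast [zsmul_eq_mul]
    linear_combination (t' * (c : ZMod (p^α))) * e2
  · rintro ⟨n, rfl⟩
    exact ⟨n, 0, by simp⟩

lemma psi_surj (p α β : ℕ) (hp : p.Prime) (hαβ : α ≤ β)
    (H : AddSubgroup (ZMod (p ^ α) × ZMod (p ^ β))) :
    ∃ i ≤ α, ∃ j ≤ β, ∃ c < p ^ (min i (β - j)), H = psiSub p α β i j c := by
  have hA : NeZero (p ^ α) := ⟨pow_ne_zero _ hp.pos.ne'⟩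
  have hB : NeZero (p ^ β) := ⟨pow_ne_zero _ hp.pos.ne'⟩
  obtain ⟨i, hi, hHi⟩ := zmod_subgroup_classify p α hp
    (H.comap (AddMonoidHom.inl (ZMod (p ^ α)) (ZMod (p ^ β))))
  obtain ⟨j, hj, hHj⟩ := zmod_subgroup_classify p β hp
    (H.map (AddMonoidHom.snd (ZMod (p ^ α)) (ZMod (p ^ β))))
  set m := min i (β - j) with hm
  have hm1 : m ≤ i := min_le_left _ _
  have hm2 : m ≤ β - j := min_le_right _ _
  -- find x with (x, p^j) ∈ H
  have hpj : ((p ^ j : ℕ) : ZMod (p ^ β)) ∈ H.map (AddMonoidHom.snd _ _) := by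
    rw [hHj]; exact mem_zmultiples _
  obtain ⟨⟨x, y⟩, hxyH, hy⟩ := hpj
  have hy' : y = ((p ^ j : ℕ) : ZMod (p ^ β)) := hy
  subst hy'
  -- p^(β-j) * x is in the first-factor subgroup
  have hsm : (p ^ (β - j)) • (x, ((p ^ j : ℕ) : ZMod (p ^ β)))
      = ((p ^ (β - j)) • x, (0 : ZMod (p ^ β))) := by
    have : (p ^ (β - j)) • ((p ^ j : ℕ) : ZMod (p ^ β)) = 0 := by
      have e : (β - j) + j = β := by omega
      push_cast [nsmul_eq_mul]
      rw [← pow_add, e]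
      exact_mod_cast ZMod.natCast_self (p ^ β)
    rw [Prod.smul_mk, this]
  have hmem : (p ^ (β - j)) • x ∈ zmultiples ((p ^ i : ℕ) : ZMod (p ^ α)) := by
    rw [← hHi]
    show ((p ^ (β - j)) • x, (0 : ZMod (p ^ β))) ∈ H
    rw [← hsm]
    exact nsmul_mem hxyH _
  have hxval : (p ^ (β - j)) • x = ((p ^ (β - j) * x.val : ℕ) : ZMod (p ^ α)) := by
    conv_lhs => rw [← ZMod.natCast_rightInverse x]
    push_cast [nsmul_eq_mul]
    ring
  rw [hxval, mem_zmul_nat (pow_dvd_pow p hi)] at hmem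
  rw [ZMod.val_natCast, Nat.dvd_mod_iff (pow_dvd_pow p hi)] at hmem
  -- p^(i-m) ∣ x.val
  have hdvdx : p ^ (i - m) ∣ x.val := by
    rcases le_total i (β - j) with h | h
    · have : i - m = 0 := by omega
      rw [this]; simpa using one_dvd _
    · have hmeq : m = β - j := by omega
      have h1 : p ^ m * p ^ (i - m) ∣ p ^ m * x.val := by
        rw [← pow_add]
        have e : m + (i - m) = i := by omega
        rw [e, hmeq]
        exact hmem
      exact (Nat.mul_dvd_mul_iff_left (pow_pos hp.pos m)).1 h1
  set q := x.val / p ^ (i - m) with hq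
  have hqx : p ^ (i - m) * q = x.val := Nat.mul_div_cancel' hdvdx
  set c := q % p ^ m with hc
  set w := q / p ^ m with hw
  have hclt : c < p ^ m := Nat.mod_lt _ (pow_pos hp.pos m)
  refine ⟨i, hi, j, hj, c, hclt, ?_⟩
  have hP : p ^ (i - m) * p ^ m = p ^ i := by
    rw [← pow_add]; congr 1; omega
  have hval5 : x.val = c * p ^ (i - m) + w * p ^ i := by
    calc x.val = p ^ (i - m) * q := hqx.symm
      _ = p ^ (i - m) * (q % p ^ m + p ^ m * (q / p ^ m)) := by rw [Nat.mod_add_div]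
      _ = c * p ^ (i - m) + w * (p ^ (i - m) * p ^ m) := by rw [← hc, ← hw]; ring
      _ = _ := by rw [hP]
  -- x as a combination
  have hxg : x = ((c * p ^ (i - m) : ℕ) : ZMod (p ^ α))
      + ((w : ℕ) : ZMod (p ^ α)) * ((p ^ i : ℕ) : ZMod (p ^ α)) := by
    conv_lhs => rw [← ZMod.natCast_rightInverse x]
    rw [hval5]
    push_cast
    ring
  apply le_antisymm
  · -- H ≤ psiSub
    rintro ⟨u, v⟩ huv
    have hv : v ∈ zmultiples ((p ^ j : ℕ) : ZMod (p ^ β)) := by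
      rw [← hHj]; exact ⟨(u, v), huv, rfl⟩
    obtain ⟨n, hn⟩ := hv
    change n • ((p ^ j : ℕ) : ZMod (p ^ β)) = v at hn
    have huH : u - n • x ∈ zmultiples ((p ^ i : ℕ) : ZMod (p ^ α)) := by
      rw [← hHi]
      show (u - n • x, (0 : ZMod (p ^ β))) ∈ H
      have : (u - n • x, (0 : ZMod (p ^ β)))
          = (u, v) - n • (x, ((p ^ j : ℕ) : ZMod (p ^ β))) := by
        rw [Prod.smul_mk, Prod.mk_sub_mk, ← hn, sub_self]
      rw [this]
      exact sub_mem huv (zsmul_mem hxyH n)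
    obtain ⟨s, hs⟩ := huH
    change s • ((p ^ i : ℕ) : ZMod (p ^ α)) = u - n • x at hs
    rw [mem_psiSub]
    refine ⟨s + n * (w : ℕ), n, ?_⟩
    have hs' := hs
    apply Prod.ext
    · simp only [Prod.fst_add, Prod.smul_fst, Prod.smul_mk]
      push_cast [zsmul_eq_mul] at hs' hxg ⊢
      linear_combination hs' - (n : ZMod (p ^ α)) * hxg
    · simp only [Prod.snd_add, Prod.smul_snd, Prod.smul_mk]
      rw [← hn]
      push_cast [zsmul_eq_mul]
      ring
  · -- psiSub ≤ H
    rw [psiSub, AddSubgroup.closure_le]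
    rintro z (rfl | rfl)
    · show (((p ^ i : ℕ) : ZMod (p ^ α)), (0 : ZMod (p ^ β))) ∈ H
      have : ((p ^ i : ℕ) : ZMod (p ^ α)) ∈ zmultiples ((p ^ i : ℕ) : ZMod (p ^ α)) :=
        mem_zmultiples _
      rw [← hHi] at this
      exact this
    · show (((c * p ^ (i - m) : ℕ) : ZMod (p ^ α)), ((p ^ j : ℕ) : ZMod (p ^ β))) ∈ H
      have h2 : (((c * p ^ (i - m) : ℕ) : ZMod (p ^ α)), ((p ^ j : ℕ) : ZMod (p ^ β)))
          = (x, ((p ^ j : ℕ) : ZMod (p ^ β)))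
            - w • (((p ^ i : ℕ) : ZMod (p ^ α)), (0 : ZMod (p ^ β))) := by
        rw [Prod.smul_mk, Prod.mk_sub_mk, Prod.mk.injEq]
        constructor
        · rw [hxg]; push_cast [nsmul_eq_mul]; ring
        · simp
      rw [h2]
      refine sub_mem hxyH (nsmul_mem ?_ _)
      have : ((p ^ i : ℕ) : ZMod (p ^ α)) ∈ zmultiples ((p ^ i : ℕ) : ZMod (p ^ α)) :=
        mem_zmultiples _
      rw [← hHi] at this
      exact this

lemma psi_inj (p α β : ℕ) (hp : p.Prime) {i i' j j' c c' : ℕ}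
    (hi : i ≤ α) (hi' : i' ≤ α) (hj : j ≤ β) (hj' : j' ≤ β)
    (hc : c < p ^ (min i (β - j))) (hc' : c' < p ^ (min i' (β - j')))
    (h : psiSub p α β i j c = psiSub p α β i' j' c') : i = i' ∧ j = j' ∧ c = c' := by
  have hA : NeZero (p ^ α) := ⟨pow_ne_zero _ hp.pos.ne'⟩
  have hB : NeZero (p ^ β) := ⟨pow_ne_zero _ hp.pos.ne'⟩
  have hjj : j = j' := by
    have := congrArg (AddSubgroup.map (AddMonoidHom.snd (ZMod (p ^ α)) (ZMod (p ^ β)))) h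
    rw [psi_map_snd, psi_map_snd] at this
    exact zmul_pow_inj p β hp hj hj' this
  have hii : i = i' := by
    have := congrArg (AddSubgroup.comap (AddMonoidHom.inl (ZMod (p ^ α)) (ZMod (p ^ β)))) h
    rw [psi_comap_inl p α β i j c hp hi hj, psi_comap_inl p α β i' j' c' hp hi' hj'] at this
    exact zmul_pow_inj p α hp hi hi' this
  subst hjj; subst hii
  refine ⟨rfl, rfl, ?_⟩
  set m := min i (β - j) with hm
  have hm1 : m ≤ i := min_le_left _ _
  have hm2 : m ≤ β - j := min_le_right _ _
  -- the second generator of psiSub i j c lies in psiSub i j c'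
  have hg : (((c * p ^ (i - m) : ℕ) : ZMod (p ^ α)), ((p ^ j : ℕ) : ZMod (p ^ β)))
      ∈ psiSub p α β i j c' := by
    rw [← h, psiSub]
    exact AddSubgroup.subset_closure (Set.mem_insert_iff.2 (Or.inr rfl))
  rw [mem_psiSub] at hg
  obtain ⟨s, t, heq⟩ := hg
  rw [Prod.ext_iff] at heq
  obtain ⟨h1, h2⟩ := heq
  simp only [Prod.fst_add, Prod.snd_add, Prod.smul_fst, Prod.smul_snd, Prod.smul_mk,
    smul_zero, zero_add] at h1 h2
  -- from h2 : t • p^j = p^j, get t = 1 + p^(β-j) * t'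
  have h3 : (t - 1) • ((p ^ j : ℕ) : ZMod (p ^ β)) = 0 := by
    rw [sub_smul, one_smul, h2, sub_self]
  have hdvd : ((p ^ (β - j) : ℕ) : ℤ) ∣ (t - 1) := by
    rw [← addOrderOf_pow_zmod p β j hp hj]
    exact addOrderOf_dvd_iff_zsmul_eq_zero.2 h3
  obtain ⟨t', ht'⟩ := hdvd
  have ht : t = 1 + (p ^ (β - j) : ℕ) * t' := by omega
  -- now show (c - c') * p^(i-m) is a multiple of p^i
  have e1 : (β - j - m) + i = (β - j) + (i - m) := by omega
  have e2 : ((p : ZMod (p ^ α)) ^ (β - j - m)) * (p : ZMod (p ^ α)) ^ i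
      = ((p : ZMod (p ^ α)) ^ (β - j)) * (p : ZMod (p ^ α)) ^ (i - m) := by
    rw [← pow_add, ← pow_add, e1]
  have hk : ((((c : ℤ) - c') * p ^ (i - m) : ℤ) : ZMod (p ^ α))
      ∈ zmultiples ((p ^ i : ℕ) : ZMod (p ^ α)) := by
    refine ⟨s + ((c' * p ^ (β - j - m) : ℕ) : ℤ) * t', ?_⟩
    show (s + ((c' * p ^ (β - j - m) : ℕ) : ℤ) * t') • ((p ^ i : ℕ) : ZMod (p ^ α)) = _
    rw [ht] at h1
    push_cast [zsmul_eq_mul] at h1 ⊢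
    linear_combination h1 + ((t' : ZMod (p ^ α)) * c') * e2
  rw [mem_zmul_int (pow_dvd_pow p hi)] at hk
  have hPi : ((p : ℤ) ^ i) = (p : ℤ) ^ m * (p : ℤ) ^ (i - m) := by
    rw [← pow_add]; congr 1; omega
  push_cast [hPi] at hk
  have hp0 : (0:ℤ) < (p:ℤ) := by exact_mod_cast hp.pos
  have hne : ((p : ℤ) ^ (i - m)) ≠ 0 := by positivity
  have hk2 : (p : ℤ) ^ m ∣ ((c : ℤ) - c') := by
    rcases hk with ⟨e, he⟩
    refine ⟨e, ?_⟩
    have := mul_right_cancel₀ hne (by linarith [he] : ((c : ℤ) - c') * p ^ (i - m) = ((p:ℤ) ^ m * e) * p ^ (i - m))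
    linarith [this]
  have : ((c : ℤ) - c') = 0 := by
    refine Int.eq_zero_of_abs_lt_dvd hk2 ?_
    have h1' : (c : ℤ) < (p : ℤ) ^ m := by exact_mod_cast hc
    have h2' : (c' : ℤ) < (p : ℤ) ^ m := by exact_mod_cast hc'
    rw [abs_lt]
    constructor <;> [linarith; linarith]
  omega
open Finset

lemma L1 (x : ℤ) (i β : ℕ) (h : i ≤ β) :
    (∑ j ∈ range (β + 1), x ^ (min i j)) * (x - 1)
      = x ^ i * (((β - i : ℕ) : ℤ) * (x - 1) + x) - 1 := by
  induction β, h using Nat.le_induction with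
  | base =>
    have : ∑ j ∈ range (i + 1), x ^ (min i j) = ∑ j ∈ range (i + 1), x ^ j := by
      refine Finset.sum_congr rfl fun j hj => ?_
      rw [mem_range] at hj
      rw [min_eq_right (by omega : j ≤ i)]
    rw [this, geom_sum_mul, Nat.sub_self]
    push_cast
    rw [pow_succ]
    ring
  | succ b hb ih =>
    have hmin : min i (b + 1) = i := min_eq_left (by omega)
    have h1 : ((b + 1 - i : ℕ) : ℤ) = ((b - i : ℕ) : ℤ) + 1 := by omega
    rw [sum_range_succ, add_mul, ih, hmin, h1]
    ring

lemma sum_min_identity (x : ℤ) (α β : ℕ) (hαβ : α ≤ β) :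
    (∑ i ∈ range (α + 1), ∑ j ∈ range (β + 1), x ^ (min i j)) * (x - 1) ^ 2
      = ((β : ℤ) - α + 1) * x ^ (α + 2) - ((β : ℤ) - α - 1) * x ^ (α + 1)
        - ((α : ℤ) + β + 3) * x + ((α : ℤ) + β + 1) := by
  induction α with
  | zero =>
    rw [sum_range_one]
    have : ∀ j, min 0 j = 0 := fun j => Nat.min_eq_zero_iff.2 (Or.inl rfl)
    simp only [this, pow_zero, sum_const, card_range, nsmul_eq_mul, mul_one]
    push_cast
    ring
  | succ a ih =>
    have ha : a ≤ β := by omega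
    have hL := L1 x (a + 1) β (by omega)
    have hb1 : ((β - (a + 1) : ℕ) : ℤ) = (β : ℤ) - a - 1 := by omega
    rw [hb1] at hL
    rw [sum_range_succ, add_mul, ih ha]
    have : (∑ j ∈ range (β + 1), x ^ (min (a + 1) j)) * (x - 1) ^ 2
        = ((∑ j ∈ range (β + 1), x ^ (min (a + 1) j)) * (x - 1)) * (x - 1) := by ring
    rw [this, hL]
    push_cast
    ring

lemma card_count (p α β : ℕ) (hp : p.Prime) (hαβ : α ≤ β) :
    Nat.card (AddSubgroup (ZMod (p ^ α) × ZMod (p ^ β)))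
      = ∑ i ∈ range (α + 1), ∑ j ∈ range (β + 1), p ^ (min i j) := by
  set Ψ : (Σ x : Fin (α + 1) × Fin (β + 1), Fin (p ^ (min x.1.1 (β - x.2.1))))
      → AddSubgroup (ZMod (p ^ α) × ZMod (p ^ β)) :=
    fun t => psiSub p α β t.1.1.1 t.1.2.1 t.2.1 with hΨ
  have hbij : Function.Bijective Ψ := by
    constructor
    · rintro ⟨⟨⟨i, hi⟩, ⟨j, hj⟩⟩, ⟨c, hc⟩⟩ ⟨⟨⟨i', hi'⟩, ⟨j', hj'⟩⟩, ⟨c', hc'⟩⟩ h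
      simp only [hΨ] at h
      obtain ⟨e1, e2, e3⟩ := psi_inj p α β hp (by omega) (by omega) (by omega) (by omega)
        hc hc' h
      subst e1; subst e2; subst e3
      rfl
    · intro H
      obtain ⟨i, hi, j, hj, c, hc, rfl⟩ := psi_surj p α β hp hαβ H
      exact ⟨⟨(⟨i, by omega⟩, ⟨j, by omega⟩), ⟨c, hc⟩⟩, rfl⟩
  rw [← Nat.card_eq_of_bijective Ψ hbij, Nat.card_eq_fintype_card, Fintype.card_sigma]
  rw [Fintype.sum_prod_type]
  rw [Fin.sum_univ_eq_sum_range
    (fun i => ∑ j : Fin (β + 1), Fintype.card (Fin (p ^ (min i (β - j.1)))))]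
  refine Finset.sum_congr rfl fun i _ => ?_
  rw [Fin.sum_univ_eq_sum_range (fun j => Fintype.card (Fin (p ^ (min i (β - j)))))]
  have : ∀ j ∈ range (β + 1), Fintype.card (Fin (p ^ (min i (β - j))))
      = (fun j => p ^ (min i j)) (β + 1 - 1 - j) := by
    intro j hj
    rw [Fintype.card_fin]
    have e : β + 1 - 1 - j = β - j := by omega
    rw [e]
  rw [Finset.sum_congr rfl this,
    Finset.sum_range_reflect (fun j => p ^ (min i j)) (β + 1)]

theorem count_subgroups_prime_power (p : ℕ) (hp : p.Prime) (α β : ℕ)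
    (hα : 1 ≤ α) (hαβ : α ≤ β) :
    (Nat.card (AddSubgroup (ZMod (p ^ α) × ZMod (p ^ β))) : ℤ) * ((p : ℤ) - 1) ^ 2
      = ((β : ℤ) - α + 1) * (p : ℤ) ^ (α + 2) - ((β : ℤ) - α - 1) * (p : ℤ) ^ (α + 1)
        - ((α : ℤ) + β + 3) * p + ((α : ℤ) + β + 1) := by
  rw [card_count p α β hp hαβ]
  rw [← sum_min_identity (p : ℤ) α β hαβ]
  congr 1
  push_cast
  rfl
end

section
/- Let m, n be positive integers, and let a, b, c, d, ℓ be positive integers with a ∣ m, b ∣ a, c ∣ n, d ∣ c, a/b = c/d, ℓ ≤ a/b, gcd(ℓ, a/b) = 1. Define K = {(i·(m/a), i·ℓ·(n/c) + j·(n/d)) : 0 ≤ i ≤ a−1, 0 ≤ j ≤ d−1} ⊆ ℤ_m × ℤ_n. Then K is closed under the multiplication of ℤ_m × ℤ_n if and only if (c/d) divides ℓ·(n/c) − (m/a). -/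
lemma zmod_natCast_eq_iff_int_dvd (n A B : ℕ) :
    (A : ZMod n) = (B : ZMod n) ↔ ((n:ℤ)) ∣ (A:ℤ) - (B:ℤ) := by
  rw [ZMod.natCast_eq_natCast_iff, Nat.modEq_iff_dvd, dvd_sub_comm]

theorem K_subring_iff (m n a b c d ℓ : ℕ)
    (hm : 0 < m) (hn : 0 < n) (hb : 0 < b) (hd : 0 < d) (hℓ : 0 < ℓ)
    (ham : a ∣ m) (hba : b ∣ a) (hcn : c ∣ n) (hdc : d ∣ c)
    (habcd : a / b = c / d) (hle : ℓ ≤ a / b) (hcop : Nat.gcd ℓ (a / b) = 1)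
    (K : Set (ZMod m × ZMod n))
    (hK : K = {z : ZMod m × ZMod n | ∃ i < a, ∃ j < d,
        z = (((i * (m / a) : ℕ) : ZMod m), ((i * ℓ * (n / c) + j * (n / d) : ℕ) : ZMod n))}) :
    (∀ x ∈ K, ∀ y ∈ K, x * y ∈ K) ↔
      ((c / d : ℕ) : ℤ) ∣ ((ℓ * (n / c) : ℕ) : ℤ) - ((m / a : ℕ) : ℤ) := by
  subst hK
  set M := m / a with hMdef
  set C := n / c with hCdef
  set D := n / d with hDdef
  set E := c / d with hEdef
  rw [habcd] at hcop
  have ha : 0 < a := Nat.pos_of_dvd_of_pos ham hm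
  have hc : 0 < c := Nat.pos_of_dvd_of_pos hcn hn
  have hM : 0 < M := Nat.div_pos (Nat.le_of_dvd hm ham) ha
  have hC : 0 < C := Nat.div_pos (Nat.le_of_dvd hn hcn) hc
  have hD : 0 < D := Nat.div_pos (Nat.le_of_dvd hn (hdc.trans hcn)) hd
  have hE : 0 < E := Nat.div_pos (Nat.le_of_dvd hc hdc) hd
  have hmM : m = a * M := (Nat.mul_div_cancel' ham).symm
  have hnC : n = c * C := (Nat.mul_div_cancel' hcn).symm
  have hnD : n = d * D := (Nat.mul_div_cancel' (hdc.trans hcn)).symm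
  have hcd : c = d * E := (Nat.mul_div_cancel' hdc).symm
  have haE : a = b * E := by
    rw [← habcd]; exact (Nat.mul_div_cancel' hba).symm
  have hDEC : D = E * C := by
    have h1 : d * D = d * (E * C) := by rw [← hnD, hnC, hcd]; ring
    exact Nat.eq_of_mul_eq_mul_left hd h1
  -- integer versions
  have hmZ : (m : ℤ) = a * M := by exact_mod_cast hmM
  have hnZ : (n : ℤ) = d * E * C := by
    push_cast [hnD, hDEC]; ring
  have hDZ : (D : ℤ) = E * C := by exact_mod_cast hDEC
  have haZ : (a : ℤ) = b * E := by exact_mod_cast haE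
  have hM0 : (M : ℤ) ≠ 0 := by positivity
  have hC0 : (C : ℤ) ≠ 0 := by positivity
  constructor
  · intro hcl
    by_cases hE1 : E = 1
    · simp [hE1]
    · have ha2 : 1 < a := by
        have : E ≤ b * E := Nat.le_mul_of_pos_left E hb
        omega
      have hmem := hcl _ ⟨1, ha2, 0, hd, rfl⟩ _ ⟨1, ha2, 0, hd, rfl⟩
      obtain ⟨i, hi, j, hj, hEq⟩ := hmem
      rw [Prod.mk_mul_mk, Prod.mk.injEq] at hEq
      obtain ⟨h1, h2⟩ := hEq
      rw [← Nat.cast_mul, zmod_natCast_eq_iff_int_dvd] at h1 h2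
      push_cast at h1 h2
      obtain ⟨k, hk⟩ := h1
      obtain ⟨k2, hk2⟩ := h2
      have hMi : (M : ℤ) - i = a * k := by
        apply mul_right_cancel₀ hM0
        linear_combination hk + k * hmZ
      have hkey : (ℓ : ℤ) * ℓ * C - i * ℓ - j * E = d * E * k2 := by
        apply mul_right_cancel₀ hC0
        linear_combination hk2 + k2 * hnZ + j * hDZ
      have hEd : (E : ℤ) ∣ ℓ * ((ℓ : ℤ) * C - M) := by
        refine ⟨d * k2 + j - ℓ * (b * k), ?_⟩
        linear_combination hkey - ℓ * hMi - ℓ * k * haZ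
      have hco : IsCoprime (E : ℤ) (ℓ : ℤ) := by
        rw [Int.isCoprime_iff_gcd_eq_one, Int.gcd_comm, Int.gcd_natCast_natCast]
        exact hcop
      have := hco.dvd_of_dvd_mul_left hEd
      push_cast
      exact this
  · intro hdvd x hx y hy
    obtain ⟨i₁, hi₁, j₁, hj₁, rfl⟩ := hx
    obtain ⟨i₂, hi₂, j₂, hj₂, rfl⟩ := hy
    push_cast at hdvd
    obtain ⟨u, hu⟩ := hdvd
    -- choose i
    set i : ℕ := (i₁ * i₂ * M) % a with hidef
    have hilt : i < a := Nat.mod_lt _ ha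
    have hq : (i₁ : ℤ) * i₂ * M = a * ((i₁ * i₂ * M) / a : ℕ) + i := by
      rw [hidef]; push_cast; rw [← Nat.cast_mul]
      exact_mod_cast (Nat.div_add_mod (i₁ * i₂ * M) a).symm
    set q : ℤ := (((i₁ * i₂ * M) / a : ℕ) : ℤ) with hqdef
    -- the key witness W
    set W : ℤ := ℓ * (i₁ * i₂ * u + b * q) + ℓ * C * (i₁ * j₂ + i₂ * j₁) + j₁ * j₂ * D
      with hWdef
    have hDW : ((i₁:ℤ) * ℓ * C + j₁ * D) * (i₂ * ℓ * C + j₂ * D) - i * ℓ * C = D * W := by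
      rw [hWdef]
      linear_combination ((ℓ:ℤ) * C) * hq + (ℓ:ℤ) * C * q * haZ -
        (ℓ:ℤ) * (i₁ * i₂ * u + b * q) * hDZ + (ℓ:ℤ) * C * i₁ * i₂ * hu
    set j : ℕ := (W % (d : ℤ)).toNat with hjdef
    have hd0 : (0:ℤ) < d := by exact_mod_cast hd
    have hjZ : (j : ℤ) = W % d := by
      rw [hjdef]; exact Int.toNat_of_nonneg (Int.emod_nonneg _ hd0.ne')
    have hjlt : j < d := by
      have := Int.emod_lt_of_pos W hd0
      omega
    refine ⟨i, hilt, j, hjlt, ?_⟩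
    rw [Prod.mk_mul_mk, Prod.mk.injEq]
    constructor
    · rw [← Nat.cast_mul, zmod_natCast_eq_iff_int_dvd]
      refine ⟨q, ?_⟩
      push_cast
      linear_combination (M:ℤ) * hq - q * hmZ
    · rw [← Nat.cast_mul, zmod_natCast_eq_iff_int_dvd]
      refine ⟨W / (d:ℤ), ?_⟩
      have hWd : W - j = d * (W / d) := by
        rw [hjZ]; linear_combination (Int.emod_add_mul_ediv W d).symm
      push_cast
      linear_combination hDW + (D:ℤ) * hWd + (W / d) * d * hDZ - (W / d) * hnZ
end

section
/- Let m, n be positive integers and a, b, c, d, ℓ positive integers with a ∣ m, b ∣ a, c ∣ n, d ∣ c, a/b = c/d, ℓ ≤ a/b, gcd(ℓ, a/b) = 1. The subgroup K = {(i·(m/a), i·ℓ·(n/c) + j·(n/d)) : 0 ≤ i ≤ a−1, 0 ≤ j ≤ d−1} of ℤ_m × ℤ_n contains the multiplicative identity (1, 1) if and only if a = m, c = n, and ℓ = 1. -/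
lemma aux_eq_one {e m x : ℕ} (hem : e ∣ m) (hex : e ∣ x) (h : (1:ℕ) ≡ x [MOD m]) :
    e = 1 := by
  have h1 : (m:ℤ) ∣ (x:ℤ) - 1 := Nat.modEq_iff_dvd.1 h
  have h2 : (e:ℤ) ∣ (x:ℤ) := Int.natCast_dvd_natCast.2 hex
  have h3 : (e:ℤ) ∣ (x:ℤ) - 1 := dvd_trans (Int.natCast_dvd_natCast.2 hem) h1
  have h4 : (e:ℤ) ∣ 1 := by
    have := dvd_sub h2 h3
    simpa using this
  exact Nat.dvd_one.mp (by exact_mod_cast h4)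

theorem K_unital_iff (m n a b c d ℓ : ℕ)
    (hm : 0 < m) (hn : 0 < n) (hb : 0 < b) (hd : 0 < d) (hℓ : 0 < ℓ)
    (ham : a ∣ m) (hba : b ∣ a) (hcn : c ∣ n) (hdc : d ∣ c)
    (habcd : a / b = c / d) (hle : ℓ ≤ a / b) (hcop : Nat.gcd ℓ (a / b) = 1)
    (K : Set (ZMod m × ZMod n))
    (hK : K = {z : ZMod m × ZMod n | ∃ i < a, ∃ j < d,
        z = (((i * (m / a) : ℕ) : ZMod m), ((i * ℓ * (n / c) + j * (n / d) : ℕ) : ZMod n))}) :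
    (1, 1) ∈ K ↔ a = m ∧ c = n ∧ ℓ = 1 := by
  subst hK
  constructor
  · rintro ⟨i, hia, j, hjd, hz⟩
    rw [Prod.mk.injEq] at hz
    obtain ⟨hz1, hz2⟩ := hz
    have ha : 0 < a := lt_of_le_of_lt (Nat.zero_le i) hia
    -- modular congruences
    have hc1 : (1:ℕ) ≡ i * (m / a) [MOD m] := by
      rw [← ZMod.natCast_eq_natCast_iff]; simpa using hz1
    have hc2 : (1:ℕ) ≡ i * ℓ * (n / c) + j * (n / d) [MOD n] := by
      rw [← ZMod.natCast_eq_natCast_iff]; simpa using hz2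
    -- a = m
    have hma : m / a = 1 :=
      aux_eq_one (Nat.div_dvd_of_dvd ham) (dvd_mul_left _ i) hc1
    have ham' : a = m := by
      have := Nat.mul_div_cancel' ham
      rw [hma, Nat.mul_one] at this; exact this
    -- c = n
    have hc0 : 0 < c := Nat.pos_of_dvd_of_pos hcn hn
    have hncnd : n / c ∣ n / d := by
      obtain ⟨k, hk⟩ := hdc
      obtain ⟨t, ht⟩ := hcn
      have hc0' : 0 < c := hc0
      have h1 : n / c = t := by rw [ht, Nat.mul_div_cancel_left _ hc0']
      have h2 : n / d = k * t := by
        rw [ht, hk, Nat.mul_assoc, Nat.mul_div_cancel_left _ hd]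
      rw [h1, h2]; exact dvd_mul_left t k
    have hnc : n / c = 1 := by
      refine aux_eq_one (Nat.div_dvd_of_dvd hcn) ?_ hc2
      exact dvd_add (dvd_mul_left _ _) (Dvd.dvd.mul_left hncnd j)
    have hcn' : c = n := by
      have := Nat.mul_div_cancel' hcn
      rw [hnc, Nat.mul_one] at this; exact this
    refine ⟨ham', hcn', ?_⟩
    -- now prove ℓ = 1
    rcases Nat.lt_or_ge 1 m with hm1 | hm1
    · -- m > 1 : i = 1
      have hi1 : i = 1 := by
        rw [hma, Nat.mul_one] at hc1
        have := (Nat.ModEq.symm hc1)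
        have h1m : 1 % m = 1 := Nat.mod_eq_of_lt hm1
        have him : i % m = i := Nat.mod_eq_of_lt (ham' ▸ hia)
        unfold Nat.ModEq at this
        rw [h1m, him] at this
        exact this
      have hdn : d ∣ n := hcn' ▸ hdc
      have hdnd : d * (n / d) = n := Nat.mul_div_cancel' hdn
      have hℓle : ℓ ≤ n / d := by
        rw [hcn'] at habcd; exact habcd ▸ hle
      rw [hi1, hnc] at hc2
      simp only [Nat.one_mul, Nat.mul_one] at hc2
      -- hc2 : 1 ≡ ℓ + j * (n / d) [MOD n]
      have hq : n / d ≤ d * (n / d) := Nat.le_mul_of_pos_left _ hd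
      have hub : j * (n / d) ≤ (d - 1) * (n / d) :=
        Nat.mul_le_mul_right _ (by omega)
      have hub2 : (d - 1) * (n / d) = d * (n/d) - (n/d) := by
        rw [Nat.sub_mul, Nat.one_mul]
      have hxle : ℓ + j * (n / d) ≤ n := by omega
      have hx1 : 1 ≤ ℓ + j * (n / d) := by omega
      have hdvd : n ∣ (ℓ + j * (n / d)) - 1 := (Nat.modEq_iff_dvd' hx1).1 hc2
      have : (ℓ + j * (n / d)) - 1 = 0 :=
        Nat.eq_zero_of_dvd_of_lt hdvd (by omega)
      omega
    · -- m = 1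
      have hm1' : m = 1 := by omega
      have ha1 : a = 1 := by omega
      have hb1 : b = 1 := Nat.le_antisymm (ha1 ▸ Nat.le_of_dvd ha hba) hb
      have : a / b = 1 := by rw [ha1, hb1]
      omega
  · rintro ⟨rfl, rfl, rfl⟩
    rcases Nat.lt_or_ge 1 a with h1 | h1
    · exact ⟨1, h1, 0, hd, by simp [Nat.div_self hm, Nat.div_self hn]⟩
    · have ha1 : a = 1 := by omega
      have hb1 : b = 1 := by have := Nat.le_of_dvd hm hba; omega
      have hcd : c / d = 1 := by rw [← habcd, ha1, hb1]
      have hdc' : d = c := by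
        have := Nat.mul_div_cancel' hdc
        rw [hcd, Nat.mul_one] at this; exact this
      refine ⟨0, by omega, 1 % c, by rw [hdc']; exact Nat.mod_lt _ hn, ?_⟩
      rw [Prod.mk.injEq]
      constructor
      · have : a = 1 := ha1
        subst this
        exact Subsingleton.elim _ _
      · rw [hdc', Nat.div_self hn]
        simp [ZMod.natCast_mod]
end

section
/- Let m, n be positive integers. The number of unital subrings of the ring ℤ_m × ℤ_n (subrings containing (1,1)) equals τ(gcd(m, n)). -/
open AddSubgroup

lemma zmod_mul_mem {g : ℕ} [NeZero g] (H : AddSubgroup (ZMod g)) (a : ZMod g) {z : ZMod g}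
    (hz : z ∈ H) : a * z ∈ H := by
  have h : a * z = a.val • z := by
    rw [nsmul_eq_mul, ZMod.natCast_val, ZMod.cast_id]
  rw [h]
  exact H.nsmul_mem hz a.val

lemma card_addSubgroup_zmod (g : ℕ) (hg : 0 < g) :
    Nat.card (AddSubgroup (ZMod g)) = g.divisors.card := by
  haveI : NeZero g := ⟨hg.ne'⟩
  let f : {d // d ∈ g.divisors} → AddSubgroup (ZMod g) :=
    fun d => zmultiples ((d.1 : ℕ) : ZMod g)
  have hbij : Function.Bijective f := by
    constructor
    · rintro ⟨d1, hd1⟩ ⟨d2, hd2⟩ h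
      simp only [f] at h
      have hdvd1 := (Nat.mem_divisors.mp hd1).1
      have hdvd2 := (Nat.mem_divisors.mp hd2).1
      have hcard : addOrderOf ((d1 : ZMod g)) = addOrderOf ((d2 : ZMod g)) := by
        rw [← Nat.card_zmultiples, ← Nat.card_zmultiples, h]
      rw [ZMod.addOrderOf_coe _ hg.ne', ZMod.addOrderOf_coe _ hg.ne',
        Nat.gcd_eq_right hdvd1, Nat.gcd_eq_right hdvd2] at hcard
      have : d1 = d2 := by
        have e1 : g / (g / d1) = d1 := Nat.div_div_self hdvd1 hg.ne'
        have e2 : g / (g / d2) = d2 := Nat.div_div_self hdvd2 hg.ne'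
        rw [← e1, ← e2, hcard]
      exact Subtype.ext this
    · intro H
      obtain ⟨⟨x, hxH⟩, hx⟩ := IsAddCyclic.exists_generator (α := H)
      have hH : H = zmultiples x := by
        apply le_antisymm
        · intro y hy
          obtain ⟨k, hk⟩ := hx ⟨y, hy⟩
          exact ⟨k, congrArg Subtype.val hk⟩
        · exact zmultiples_le_of_mem hxH
      refine ⟨⟨g.gcd x.val, Nat.mem_divisors.mpr ⟨Nat.gcd_dvd_left _ _, hg.ne'⟩⟩, ?_⟩
      show zmultiples ((g.gcd x.val : ℕ) : ZMod g) = H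
      rw [hH]
      apply le_antisymm
      · apply zmultiples_le_of_mem
        have hab := Nat.gcd_eq_gcd_ab g x.val
        refine ⟨Nat.gcdB g x.val, ?_⟩
        have h2 : ((g.gcd x.val : ℤ) : ZMod g) = (Nat.gcdB g x.val : ZMod g) * x := by
          rw [hab]
          push_cast
          rw [ZMod.natCast_self, ZMod.natCast_val, ZMod.cast_id]
          ring
        show (Nat.gcdB g x.val) • x = ((g.gcd x.val : ℕ) : ZMod g)
        rw [zsmul_eq_mul]
        push_cast at h2 ⊢
        rw [← h2]
      · apply zmultiples_le_of_mem
        obtain ⟨k, hk⟩ := Nat.gcd_dvd_right g x.val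
        refine ⟨(k : ℤ), ?_⟩
        show (k : ℤ) • ((g.gcd x.val : ℕ) : ZMod g) = x
        have h3 : ((g.gcd x.val * k : ℕ) : ZMod g) = x := by
          rw [← hk, ZMod.natCast_val, ZMod.cast_id]
        generalize hd : g.gcd x.val = d at h3 ⊢
        rw [zsmul_eq_mul, ← h3]
        push_cast
        ring
  rw [Nat.card_congr (Equiv.ofBijective f hbij).symm, Nat.card_eq_finsetCard]

theorem count_unital_subrings (m n : ℕ) (hm : 0 < m) (hn : 0 < n) :
    Nat.card {S : AddSubgroup (ZMod m × ZMod n) //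
        (∀ x ∈ S, ∀ y ∈ S, x * y ∈ S) ∧ (1, 1) ∈ S}
      = (Nat.gcd m n).divisors.card := by
  haveI : NeZero m := ⟨hm.ne'⟩
  haveI : NeZero n := ⟨hn.ne'⟩
  have hg : 0 < Nat.gcd m n := Nat.gcd_pos_of_pos_left n hm
  haveI : NeZero (Nat.gcd m n) := ⟨hg.ne'⟩
  set g := Nat.gcd m n with hgdef
  let f1 : ZMod m →+* ZMod g := ZMod.castHom (Nat.gcd_dvd_left m n) (ZMod g)
  let f2 : ZMod n →+* ZMod g := ZMod.castHom (Nat.gcd_dvd_right m n) (ZMod g)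
  let φ : ZMod m × ZMod n →+ ZMod g :=
    { toFun := fun p => f1 p.1 - f2 p.2
      map_zero' := by simp
      map_add' := by intro p q; simp; ring }
  have hφ : ∀ p : ZMod m × ZMod n, φ p = f1 p.1 - f2 p.2 := fun _ => rfl
  have hφsurj : Function.Surjective φ := by
    intro z
    refine ⟨((z.val : ZMod m), 0), ?_⟩
    rw [hφ]
    simp [f1, f2, ZMod.natCast_val, ZMod.cast_id]
  have hφ11 : φ (1, 1) = 0 := by rw [hφ]; simp
  have hker : φ.ker = zmultiples ((1, 1) : ZMod m × ZMod n) := by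
    symm
    apply AddSubgroup.eq_of_le_of_card_ge
    · exact zmultiples_le_of_mem hφ11
    · -- Nat.card ker ≤ Nat.card zmultiples (1,1)
      have hcard1 : Nat.card (zmultiples ((1, 1) : ZMod m × ZMod n)) = Nat.lcm m n := by
        rw [Nat.card_zmultiples, Prod.addOrderOf, ZMod.addOrderOf_one, ZMod.addOrderOf_one]
      have hlag : Nat.card (ZMod m × ZMod n)
          = Nat.card ((ZMod m × ZMod n) ⧸ φ.ker) * Nat.card φ.ker :=
        AddSubgroup.card_eq_card_quotient_mul_card_addSubgroup φ.ker
      have hquot : Nat.card ((ZMod m × ZMod n) ⧸ φ.ker) = g := by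
        rw [Nat.card_congr (QuotientAddGroup.quotientKerEquivOfSurjective φ hφsurj).toEquiv,
          Nat.card_zmod]
      have hprod : Nat.card (ZMod m × ZMod n) = m * n := by
        rw [Nat.card_prod, Nat.card_zmod, Nat.card_zmod]
      rw [hprod, hquot] at hlag
      have hgl : g * Nat.lcm m n = m * n := Nat.gcd_mul_lcm m n
      have : Nat.card φ.ker = Nat.lcm m n := by
        have := hlag.symm.trans hgl.symm
        exact Nat.eq_of_mul_eq_mul_left hg this
      rw [this, hcard1]
  have hmulmem : ∀ (H : AddSubgroup (ZMod g)),
      ∀ x ∈ comap φ H, ∀ y ∈ comap φ H, x * y ∈ comap φ H := by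
    intro H x hx y hy
    simp only [mem_comap] at hx hy ⊢
    have hxy : φ (x * y) = f1 x.1 * φ y + f2 y.2 * φ x := by
      rw [hφ, hφ, hφ]
      simp only [Prod.fst_mul, Prod.snd_mul, map_mul]
      ring
    rw [hxy]
    exact H.add_mem (zmod_mul_mem H _ hy) (zmod_mul_mem H _ hx)
  let e : {S : AddSubgroup (ZMod m × ZMod n) //
        (∀ x ∈ S, ∀ y ∈ S, x * y ∈ S) ∧ (1, 1) ∈ S} ≃ AddSubgroup (ZMod g) :=
    { toFun := fun S => map φ S.1
      invFun := fun H => ⟨comap φ H, hmulmem H, by rw [mem_comap, hφ11]; exact H.zero_mem⟩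
      left_inv := by
        rintro ⟨S, hS1, hS2⟩
        apply Subtype.ext
        show comap φ (map φ S) = S
        rw [comap_map_eq, sup_eq_left.mpr]
        rw [hker]
        exact zmultiples_le_of_mem hS2
      right_inv := fun H => map_comap_eq_self_of_surjective hφsurj H }
  rw [Nat.card_congr e, card_addSubgroup_zmod g hg]
end

section
/- The function h(m, n) = ∑_{d ∣ gcd(m,n), gcd(d, m/d) = gcd(d, n/d)} φ(d)/φ(d / gcd(d, m/d)) is multiplicative as a function of two variables: if gcd(m₁·m₂, n₁·n₂) = 1 then h(m₁·n₁, m₂·n₂) = h(m₁, m₂) · h(n₁, n₂). -/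
/-- The arithmetic function h of the paper. -/
def h (m n : ℕ) : ℕ :=
  ∑ d ∈ ((Nat.gcd m n).divisors.filter
      (fun d => Nat.gcd d (m / d) = Nat.gcd d (n / d))),
    Nat.totient d / Nat.totient (d / Nat.gcd d (m / d))

private lemma gcd_mul_mul' {a b x y : ℕ} (hab : Nat.Coprime a b)
    (hay : Nat.Coprime a y) (hbx : Nat.Coprime b x) :
    Nat.gcd (a * b) (x * y) = Nat.gcd a x * Nat.gcd b y := by
  apply Nat.dvd_antisymm
  · set g := Nat.gcd (a * b) (x * y) with hgdef
    have hg : Nat.gcd g a * Nat.gcd g b = g :=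
      (Nat.gcd_mul_gcd_eq_iff_dvd_mul_of_coprime hab).mpr (Nat.gcd_dvd_left (a*b) (x*y))
    have h1 : Nat.gcd g a ∣ Nat.gcd a x := by
      refine Nat.dvd_gcd (Nat.gcd_dvd_right g a) ?_
      exact (hay.coprime_dvd_left (Nat.gcd_dvd_right g a)).dvd_of_dvd_mul_right
        ((Nat.gcd_dvd_left g a).trans (Nat.gcd_dvd_right (a*b) (x*y)))
    have h2 : Nat.gcd g b ∣ Nat.gcd b y := by
      refine Nat.dvd_gcd (Nat.gcd_dvd_right g b) ?_
      exact (hbx.coprime_dvd_left (Nat.gcd_dvd_right g b)).dvd_of_dvd_mul_left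
        ((Nat.gcd_dvd_left g b).trans (Nat.gcd_dvd_right (a*b) (x*y)))
    calc g = Nat.gcd g a * Nat.gcd g b := hg.symm
    _ ∣ Nat.gcd a x * Nat.gcd b y := mul_dvd_mul h1 h2
  · exact Nat.dvd_gcd (mul_dvd_mul (Nat.gcd_dvd_left a x) (Nat.gcd_dvd_left b y))
      (mul_dvd_mul (Nat.gcd_dvd_right a x) (Nat.gcd_dvd_right b y))

private lemma gcd_div_split {a b m n : ℕ} (ham : a ∣ m) (hbn : b ∣ n)
    (hmn : Nat.Coprime m n) :
    Nat.gcd (a * b) (m * n / (a * b)) = Nat.gcd a (m / a) * Nat.gcd b (n / b) := by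
  rw [← Nat.div_mul_div_comm ham hbn]
  exact gcd_mul_mul' ((hmn.coprime_dvd_left ham).coprime_dvd_right hbn)
    ((hmn.coprime_dvd_left ham).coprime_dvd_right (Nat.div_dvd_of_dvd hbn))
    ((hmn.symm.coprime_dvd_left hbn).coprime_dvd_right (Nat.div_dvd_of_dvd ham))

private lemma mul_eq_mul_iff' {A₁ B₁ A₂ B₂ : ℕ} (hA₁ : 0 < A₁)
    (h12 : Nat.Coprime A₁ B₂) (h21 : Nat.Coprime A₂ B₁) :
    A₁ * B₁ = A₂ * B₂ ↔ A₁ = A₂ ∧ B₁ = B₂ := by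
  constructor
  · intro hE
    have d1 : A₁ ∣ A₂ := h12.dvd_of_dvd_mul_right (hE ▸ dvd_mul_right A₁ B₁)
    have d2 : A₂ ∣ A₁ := h21.dvd_of_dvd_mul_right (hE ▸ dvd_mul_right A₂ B₂)
    have hA : A₁ = A₂ := Nat.dvd_antisymm d1 d2
    subst hA
    exact ⟨rfl, Nat.eq_of_mul_eq_mul_left hA₁ hE⟩
  · rintro ⟨rfl, rfl⟩; rfl

theorem h_multiplicative (m₁ m₂ n₁ n₂ : ℕ) (hm₁ : 0 < m₁) (hm₂ : 0 < m₂)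
    (hn₁ : 0 < n₁) (hn₂ : 0 < n₂) (hcop : Nat.Coprime (m₁ * m₂) (n₁ * n₂)) :
    h (m₁ * n₁) (m₂ * n₂) = h m₁ m₂ * h n₁ n₂ := by
  have c11 : Nat.Coprime m₁ n₁ :=
    (Nat.Coprime.coprime_dvd_left (dvd_mul_right m₁ m₂) hcop).coprime_dvd_right
      (dvd_mul_right n₁ n₂)
  have c12 : Nat.Coprime m₁ n₂ :=
    (Nat.Coprime.coprime_dvd_left (dvd_mul_right m₁ m₂) hcop).coprime_dvd_right
      (dvd_mul_left n₂ n₁)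
  have c21 : Nat.Coprime m₂ n₁ :=
    (Nat.Coprime.coprime_dvd_left (dvd_mul_left m₂ m₁) hcop).coprime_dvd_right
      (dvd_mul_right n₁ n₂)
  have c22 : Nat.Coprime m₂ n₂ :=
    (Nat.Coprime.coprime_dvd_left (dvd_mul_left m₂ m₁) hcop).coprime_dvd_right
      (dvd_mul_left n₂ n₁)
  set M := Nat.gcd m₁ m₂ with hMdef
  set N := Nat.gcd n₁ n₂ with hNdef
  have hMm₁ : M ∣ m₁ := Nat.gcd_dvd_left _ _
  have hMm₂ : M ∣ m₂ := Nat.gcd_dvd_right _ _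
  have hNn₁ : N ∣ n₁ := Nat.gcd_dvd_left _ _
  have hNn₂ : N ∣ n₂ := Nat.gcd_dvd_right _ _
  have hM0 : M ≠ 0 := (Nat.gcd_pos_of_pos_left _ hm₁).ne'
  have hN0 : N ≠ 0 := (Nat.gcd_pos_of_pos_left _ hn₁).ne'
  have hcopMN : Nat.Coprime M N := (c11.coprime_dvd_left hMm₁).coprime_dvd_right hNn₁
  have hgcd : Nat.gcd (m₁ * n₁) (m₂ * n₂) = M * N :=
    gcd_mul_mul' c11 c12 c21.symm
  -- split of the gcd condition
  have hsplit₁ : ∀ a b : ℕ, a ∣ M → b ∣ N →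
      Nat.gcd (a*b) (m₁*n₁/(a*b)) = Nat.gcd a (m₁/a) * Nat.gcd b (n₁/b) :=
    fun a b ha hb => gcd_div_split (ha.trans hMm₁) (hb.trans hNn₁) c11
  have hsplit₂ : ∀ a b : ℕ, a ∣ M → b ∣ N →
      Nat.gcd (a*b) (m₂*n₂/(a*b)) = Nat.gcd a (m₂/a) * Nat.gcd b (n₂/b) :=
    fun a b ha hb => gcd_div_split (ha.trans hMm₂) (hb.trans hNn₂) c22
  have hPiff : ∀ a b : ℕ, a ∣ M → b ∣ N →
      (Nat.gcd (a*b) (m₁*n₁/(a*b)) = Nat.gcd (a*b) (m₂*n₂/(a*b)) ↔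
        (Nat.gcd a (m₁/a) = Nat.gcd a (m₂/a) ∧ Nat.gcd b (n₁/b) = Nat.gcd b (n₂/b))) := by
    intro a b ha hb
    have ha0 : 0 < a := Nat.pos_of_dvd_of_pos ha (Nat.pos_of_ne_zero hM0)
    rw [hsplit₁ a b ha hb, hsplit₂ a b ha hb]
    exact mul_eq_mul_iff' (Nat.gcd_pos_of_pos_left _ ha0)
      ((c12.coprime_dvd_left ((Nat.gcd_dvd_left _ _).trans (ha.trans hMm₁))).coprime_dvd_right
        ((Nat.gcd_dvd_left _ _).trans (hb.trans hNn₂)))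
      ((c21.coprime_dvd_left ((Nat.gcd_dvd_left _ _).trans (ha.trans hMm₂))).coprime_dvd_right
        ((Nat.gcd_dvd_left _ _).trans (hb.trans hNn₁)))
  -- recovering the components
  have hrec₁ : ∀ a b : ℕ, a ∣ M → b ∣ N → Nat.gcd (a*b) M = a := by
    intro a b ha hb
    have hco : Nat.Coprime b M := (hcopMN.symm.coprime_dvd_left hb)
    rw [Nat.Coprime.gcd_mul_right_cancel a hco, Nat.gcd_eq_left ha]
  have hrec₂ : ∀ a b : ℕ, a ∣ M → b ∣ N → Nat.gcd (a*b) N = b := by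
    intro a b ha hb
    have hco : Nat.Coprime a N := hcopMN.coprime_dvd_left ha
    rw [Nat.Coprime.gcd_mul_left_cancel b hco, Nat.gcd_eq_left hb]
  unfold h
  rw [hgcd, Finset.sum_mul_sum, ← Finset.sum_product']
  refine Finset.sum_nbij' (fun d => (Nat.gcd d M, Nat.gcd d N)) (fun p => p.1 * p.2)
    ?_ ?_ ?_ ?_ ?_
  · -- forward membership
    intro d hd
    simp only [Finset.mem_filter, Nat.mem_divisors] at hd
    obtain ⟨⟨hdvd, hMN0⟩, hP⟩ := hd
    have hdab : Nat.gcd d M * Nat.gcd d N = d :=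
      (Nat.gcd_mul_gcd_eq_iff_dvd_mul_of_coprime hcopMN).mpr hdvd
    have ha : Nat.gcd d M ∣ M := Nat.gcd_dvd_right _ _
    have hb : Nat.gcd d N ∣ N := Nat.gcd_dvd_right _ _
    have := (hPiff _ _ ha hb).mp (by rw [hdab]; exact hP)
    simp only [Finset.mem_product, Finset.mem_filter, Nat.mem_divisors]
    exact ⟨⟨⟨ha, hM0⟩, this.1⟩, ⟨⟨hb, hN0⟩, this.2⟩⟩
  · -- backward membership
    rintro ⟨a, b⟩ hab
    simp only [Finset.mem_product, Finset.mem_filter, Nat.mem_divisors] at hab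
    obtain ⟨⟨⟨ha, _⟩, hPa⟩, ⟨hb, _⟩, hPb⟩ := hab
    simp only [Finset.mem_filter, Nat.mem_divisors]
    exact ⟨⟨mul_dvd_mul ha hb, mul_ne_zero hM0 hN0⟩, (hPiff a b ha hb).mpr ⟨hPa, hPb⟩⟩
  · -- left inverse
    intro d hd
    simp only [Finset.mem_filter, Nat.mem_divisors] at hd
    exact (Nat.gcd_mul_gcd_eq_iff_dvd_mul_of_coprime hcopMN).mpr hd.1.1
  · -- right inverse
    rintro ⟨a, b⟩ hab
    simp only [Finset.mem_product, Finset.mem_filter, Nat.mem_divisors] at hab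
    obtain ⟨⟨⟨ha, _⟩, _⟩, ⟨hb, _⟩, _⟩ := hab
    simp only [Prod.mk.injEq]
    exact ⟨hrec₁ a b ha hb, hrec₂ a b ha hb⟩
  · -- terms agree
    intro d hd
    simp only [Finset.mem_filter, Nat.mem_divisors] at hd
    obtain ⟨⟨hdvd, hMN0⟩, hP⟩ := hd
    dsimp only
    have hdab : Nat.gcd d M * Nat.gcd d N = d :=
      (Nat.gcd_mul_gcd_eq_iff_dvd_mul_of_coprime hcopMN).mpr hdvd
    set a := Nat.gcd d M with hadef
    set b := Nat.gcd d N with hbdef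
    have ha : a ∣ M := Nat.gcd_dvd_right _ _
    have hb : b ∣ N := Nat.gcd_dvd_right _ _
    have ham : a ∣ m₁ := ha.trans hMm₁
    have hbn : b ∣ n₁ := hb.trans hNn₁
    have hcoab : Nat.Coprime a b := (c11.coprime_dvd_left ham).coprime_dvd_right hbn
    have hA : Nat.gcd a (m₁/a) ∣ a := Nat.gcd_dvd_left _ _
    have hB : Nat.gcd b (n₁/b) ∣ b := Nat.gcd_dvd_left _ _
    rw [← hdab, hsplit₁ a b ha hb, Nat.totient_mul hcoab, ← Nat.div_mul_div_comm hA hB,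
      Nat.totient_mul ((hcoab.coprime_dvd_left (Nat.div_dvd_of_dvd hA)).coprime_dvd_right
        (Nat.div_dvd_of_dvd hB)),
      Nat.div_mul_div_comm (Nat.totient_dvd_of_dvd (Nat.div_dvd_of_dvd hA))
        (Nat.totient_dvd_of_dvd (Nat.div_dvd_of_dvd hB))]
end

section
/- For a prime p and γ ≥ 0, h(p^{2γ}, p^{2γ}) = (p^{γ+1} − 1)/(p − 1), where h(m, n) = ∑_{d ∣ gcd(m,n), gcd(d, m/d) = gcd(d, n/d)} φ(d)/φ(d / gcd(d, m/d)). -/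
lemma totient_pow_div {p : ℕ} (hp : p.Prime) {a b : ℕ} (hb : 1 ≤ b) (hba : b ≤ a) :
    Nat.totient (p ^ a) / Nat.totient (p ^ b) = p ^ (a - b) := by
  rw [Nat.totient_prime_pow hp (by omega : 0 < a), Nat.totient_prime_pow hp hb,
    Nat.mul_div_mul_right _ _ (Nat.sub_pos_of_lt hp.one_lt),
    Nat.pow_div (by omega) hp.pos]
  congr 1
  omega

lemma term_eq {p : ℕ} (hp : p.Prime) {i n : ℕ} (hi : i ≤ n) :
    Nat.totient (p ^ i) / Nat.totient (p ^ i / Nat.gcd (p ^ i) (p ^ n / p ^ i)) =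
      if 2 * i ≤ n then Nat.totient (p ^ i) else p ^ (n - i) := by
  rw [Nat.pow_div hi hp.pos]
  split_ifs with hcase
  · rw [Nat.gcd_eq_left (pow_dvd_pow p (by omega : i ≤ n - i)),
      Nat.div_self (pow_pos hp.pos i), Nat.totient_one, Nat.div_one]
  · rw [Nat.gcd_eq_right (pow_dvd_pow p (by omega : n - i ≤ i)),
      Nat.pow_div (by omega) hp.pos, totient_pow_div hp (by omega) (by omega)]
    congr 1
    omega

theorem h_even_equal (p : ℕ) (hp : p.Prime) (γ : ℕ) :
    h (p ^ (2 * γ)) (p ^ (2 * γ)) = (p ^ (γ + 1) - 1) / (p - 1) := by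
  rw [← Nat.geomSum_eq hp.two_le]
  unfold h
  rw [Nat.gcd_self, Finset.filter_true_of_mem (fun d _ => rfl),
    Nat.sum_divisors_prime_pow hp]
  have hrw : ∀ i ∈ Finset.range (2 * γ + 1),
      Nat.totient (p ^ i) / Nat.totient (p ^ i / Nat.gcd (p ^ i) (p ^ (2 * γ) / p ^ i)) =
      if 2 * i ≤ 2 * γ then Nat.totient (p ^ i) else p ^ (2 * γ - i) := by
    intro i hi
    exact term_eq hp (by have := Finset.mem_range.mp hi; omega)
  rw [Finset.sum_congr rfl hrw]
  have hsplit : 2 * γ + 1 = (γ + 1) + γ := by ring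
  rw [hsplit, Finset.sum_range_add]
  have h1 : ∑ i ∈ Finset.range (γ + 1),
      (if 2 * i ≤ 2 * γ then Nat.totient (p ^ i) else p ^ (2 * γ - i)) = p ^ γ := by
    have htot := Nat.sum_totient (p ^ γ)
    rw [Nat.sum_divisors_prime_pow hp] at htot
    rw [← htot]
    refine Finset.sum_congr rfl fun i hi => ?_
    have := Finset.mem_range.mp hi
    rw [if_pos (by omega)]
  have h2 : ∑ j ∈ Finset.range γ,
      (if 2 * (γ + 1 + j) ≤ 2 * γ then Nat.totient (p ^ (γ + 1 + j)) else
        p ^ (2 * γ - (γ + 1 + j))) = ∑ j ∈ Finset.range γ, p ^ j := by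
    rw [← Finset.sum_range_reflect (fun j => p ^ j) γ]
    refine Finset.sum_congr rfl fun j hj => ?_
    have := Finset.mem_range.mp hj
    rw [if_neg (by omega)]
    congr 1
    omega
  rw [h1, h2, Finset.sum_range_succ, add_comm]
end

section
/- For a prime p and integers γ ≥ 0 and β > 2γ, h(p^{2γ}, p^β) = p^γ, where h(m, n) = ∑_{d ∣ gcd(m,n), gcd(d, m/d) = gcd(d, n/d)} φ(d)/φ(d / gcd(d, m/d)). -/
lemma gcd_pow_pow (p a b : ℕ) : Nat.gcd (p ^ a) (p ^ b) = p ^ min a b := by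
  rcases le_total a b with h | h
  · rw [Nat.gcd_eq_left (pow_dvd_pow p h), min_eq_left h]
  · rw [Nat.gcd_eq_right (pow_dvd_pow p h), min_eq_right h]

theorem h_even_less (p : ℕ) (hp : p.Prime) (γ β : ℕ) (hβ : 2 * γ < β) :
    h (p ^ (2 * γ)) (p ^ β) = p ^ γ := by
  have hp1 : 1 < p := hp.one_lt
  have hp0 : p ≠ 0 := hp.pos.ne'
  unfold h
  have hgcd : Nat.gcd (p ^ (2 * γ)) (p ^ β) = p ^ (2 * γ) := by
    rw [gcd_pow_pow, min_eq_left hβ.le]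
  rw [hgcd]
  have hset : (p ^ (2 * γ)).divisors.filter
      (fun d => Nat.gcd d (p ^ (2 * γ) / d) = Nat.gcd d (p ^ β / d)) = (p ^ γ).divisors := by
    ext d
    simp only [Finset.mem_filter, Nat.mem_divisors]
    constructor
    · rintro ⟨⟨hd, -⟩, hcond⟩
      refine ⟨?_, pow_ne_zero _ hp0⟩
      obtain ⟨i, hi, rfl⟩ := (Nat.dvd_prime_pow hp).mp hd
      rw [Nat.pow_div hi hp.pos, Nat.pow_div (by omega) hp.pos,
        gcd_pow_pow, gcd_pow_pow] at hcond
      have := Nat.pow_right_injective hp.two_le hcond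
      exact pow_dvd_pow p (by omega)
    · rintro ⟨hd, -⟩
      obtain ⟨i, hi, rfl⟩ := (Nat.dvd_prime_pow hp).mp hd
      refine ⟨⟨pow_dvd_pow p (by omega), pow_ne_zero _ hp0⟩, ?_⟩
      rw [Nat.pow_div (by omega) hp.pos, Nat.pow_div (by omega) hp.pos,
        gcd_pow_pow, gcd_pow_pow]
      congr 1
      omega
  rw [hset]
  nth_rewrite 2 [← Nat.sum_totient (p ^ γ)]
  apply Finset.sum_congr rfl
  intro d hd
  simp only [Nat.mem_divisors] at hd
  obtain ⟨i, hi, rfl⟩ := (Nat.dvd_prime_pow hp).mp hd.1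
  rw [Nat.pow_div (by omega) hp.pos, gcd_pow_pow, min_eq_left (by omega),
    Nat.div_self (pow_pos hp.pos i), Nat.totient_one, Nat.div_one]
end

section
/- For a prime p and γ ≥ 1, the number of subrings of the ring ℤ_{p^{2γ−1}} × ℤ_{p^{2γ−1}} equals 5·∑_{j=1}^{γ} (2j−1)·p^{γ−j}. -/
/-!
Every additive subgroup of `(ℤ/n)²` has a unique Hermite normal form: it is spanned by `(d₁, c)`
and `(0, d₂)` with `d₁, d₂ ∣ n`, `c < d₂` and `d₂ ∣ c · (n / d₁)`, and it is closed under
multiplication iff moreover `d₂ ∣ c (c - d₁)`, since `(d₁, c)² - d₁ (d₁, c) = (0, c (c - d₁))`.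

For `n = p^k` write `d₁ = p^a`, `d₂ = p^b`. At level `k + 2`, every admissible `c` for
`(p^(a+1), p^(b+2))` is divisible by `p`, and `c = p d` is admissible iff `d` is admissible for
`(p^a, p^b)` at level `k`; as admissibility is periodic in `c` with period `p^b`, this multiplies
the count by `p`. The remaining pairs (`b ≤ 1`, `a = 0` or `a = k + 2`) have only the solutions
`c = 0` (and `c = 1` when `a = 0 < b`) and contribute `5 (k + 2)`. So the number `T k` of subrings
satisfies `T 1 = 5` and `T (k + 2) = p T k + 5 (k + 2)`, which solves to the stated sum.
-/

open Finset

section CommRing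

variable {R : Type*} [CommRing R]

def hermiteSpan (A B C : R) : Submodule R (R × R) :=
  Submodule.span R {(A, C), (0, B)}

theorem mem_hermiteSpan {A B C : R} {x : R × R} :
    x ∈ hermiteSpan A B C ↔ ∃ s t : R, x = (s * A, s * C + t * B) := by
  simp only [hermiteSpan, Submodule.mem_span_pair, Prod.smul_mk, smul_eq_mul, Prod.mk_add_mk,
    mul_zero, add_zero, eq_comm]

theorem exists_mem_hermiteSpan_iff_dvd {A B C x : R} :
    (∃ y, (x, y) ∈ hermiteSpan A B C) ↔ A ∣ x := by
  simp only [mem_hermiteSpan, Prod.mk.injEq]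
  constructor
  · rintro ⟨y, s, t, rfl, -⟩
    exact dvd_mul_left A s
  · rintro ⟨s, rfl⟩
    exact ⟨_, s, 0, mul_comm A s, rfl⟩

theorem hermiteSpan_mul_mem {A B C : R} (h : B ∣ C * (C - A)) {x y : R × R}
    (hx : x ∈ hermiteSpan A B C) (hy : y ∈ hermiteSpan A B C) : x * y ∈ hermiteSpan A B C := by
  obtain ⟨D, hD⟩ := h
  obtain ⟨s, t, rfl⟩ := mem_hermiteSpan.1 hx
  obtain ⟨s', t', rfl⟩ := mem_hermiteSpan.1 hy
  refine mem_hermiteSpan.2 ⟨s * s' * A, s * s' * D + (s * t' + s' * t) * C + t * t' * B, ?_⟩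
  ext
  · simp only [Prod.fst_mul]; ring
  · simp only [Prod.snd_mul]; linear_combination (s * s') * hD

end CommRing

theorem Nat.count_mul_of_periodic {P : ℕ → Prop} [DecidablePred P] {a : ℕ}
    (hP : Function.Periodic P a) (m : ℕ) : Nat.count P (m * a) = m * Nat.count P a := by
  induction m with
  | zero => simp
  | succ m ih =>
    have hshift : ∀ k, P (m * a + k) ↔ P k := fun k => by
      simpa [add_comm] using (hP.nat_mul m k).to_iff
    simp only [Nat.succ_mul, Nat.count_add, ih, hshift]

namespace ZMod

variable {n : ℕ}

theorem natCast_dvd_intCast_iff {d : ℕ} (hd : d ∣ n) (z : ℤ) :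
    (d : ZMod n) ∣ (z : ZMod n) ↔ (d : ℤ) ∣ z := by
  constructor
  · rintro ⟨y, hy⟩
    have := congrArg (castHom hd (ZMod d)) hy
    rwa [map_intCast, map_mul, map_natCast, natCast_self, zero_mul,
      intCast_zmod_eq_zero_iff_dvd] at this
  · rintro ⟨e, rfl⟩
    exact ⟨e, by push_cast; rfl⟩

theorem natCast_dvd_natCast_iff {d : ℕ} (hd : d ∣ n) (m : ℕ) :
    (d : ZMod n) ∣ (m : ZMod n) ↔ d ∣ m := by
  exact_mod_cast natCast_dvd_intCast_iff hd m

theorem exists_mem_iff_natCast_dvd (I : Ideal (ZMod n)) :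
    ∃ d, d ∣ n ∧ ∀ x, x ∈ I ↔ (d : ZMod n) ∣ x := by
  obtain ⟨m, hm⟩ := (IsPrincipalIdealRing.principal (I.comap (Int.castRingHom (ZMod n)))).principal
  have hmem : ∀ z : ℤ, (z : ZMod n) ∈ I ↔ (m.natAbs : ℤ) ∣ z := fun z => by
    rw [Int.natAbs_dvd, ← Ideal.mem_span_singleton, ← Ideal.submodule_span_eq, ← hm]
    rfl
  have hdvd : m.natAbs ∣ n := by exact_mod_cast (hmem n).1 (by simp)
  refine ⟨m.natAbs, hdvd, fun x => ?_⟩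
  rw [← intCast_zmod_cast x, hmem, natCast_dvd_intCast_iff hdvd]

theorem natCast_div_dvd_of_mul_natCast_eq_zero [NeZero n] {d : ℕ} (hd : d ∣ n) {s : ZMod n}
    (h : s * d = 0) : ((n / d : ℕ) : ZMod n) ∣ s := by
  rw [← intCast_zmod_cast s] at h ⊢
  rw [natCast_dvd_intCast_iff (Nat.div_dvd_of_dvd hd)]
  have hd0 : (d : ℤ) ≠ 0 := by exact_mod_cast ne_zero_of_dvd_ne_zero (NeZero.ne n) hd
  have hn : ((n / d * d : ℕ) : ℤ) ∣ (s.cast : ℤ) * d := by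
    rw [Nat.div_mul_cancel hd, ← intCast_zmod_eq_zero_iff_dvd]
    exact_mod_cast h
  push_cast at hn
  exact (mul_dvd_mul_iff_right hd0).1 hn

theorem eq_of_forall_natCast_dvd_iff {d d' : ℕ} (hd : d ∣ n) (hd' : d' ∣ n)
    (h : ∀ x : ZMod n, (d : ZMod n) ∣ x ↔ (d' : ZMod n) ∣ x) : d = d' :=
  Nat.dvd_antisymm ((natCast_dvd_natCast_iff hd d').1 ((h d').2 dvd_rfl))
    ((natCast_dvd_natCast_iff hd' d).1 ((h d).1 dvd_rfl))

end ZMod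

def IsSubringHNF (n d₁ d₂ c : ℕ) : Prop :=
  d₂ ∣ c * (n / d₁) ∧ (d₂ : ℤ) ∣ c * (c - d₁)

instance (n d₁ d₂ : ℕ) : DecidablePred (IsSubringHNF n d₁ d₂) :=
  fun _ => inferInstanceAs (Decidable (_ ∧ _))

def numSubringHNF (n d₁ d₂ : ℕ) : ℕ := #{c ∈ range d₂ | IsSubringHNF n d₁ d₂ c}

section HermiteNormalForm

variable {n : ℕ} [NeZero n]

theorem mem_hermiteSpan_zero_iff {d₁ d₂ c : ℕ} (hd₁ : d₁ ∣ n) (h : d₂ ∣ c * (n / d₁))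
    {y : ZMod n} : ((0, y) ∈ hermiteSpan (d₁ : ZMod n) d₂ c) ↔ (d₂ : ZMod n) ∣ y := by
  simp only [mem_hermiteSpan, Prod.mk.injEq]
  constructor
  · rintro ⟨s, t, hs, rfl⟩
    obtain ⟨u, rfl⟩ := ZMod.natCast_div_dvd_of_mul_natCast_eq_zero hd₁ hs.symm
    obtain ⟨e, he⟩ := h
    have he' : (c : ZMod n) * ((n / d₁ : ℕ) : ZMod n) = d₂ * e := by
      exact_mod_cast congrArg (Nat.cast : ℕ → ZMod n) he
    exact ⟨u * e + t, by linear_combination u * he'⟩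
  · rintro ⟨t, rfl⟩
    exact ⟨0, t, by simp [mul_comm]⟩

theorem exists_eq_hermiteSpan (S : Submodule (ZMod n) (ZMod n × ZMod n)) :
    ∃ d₁ d₂ c : ℕ, d₁ ∣ n ∧ d₂ ∣ n ∧ c < d₂ ∧ d₂ ∣ c * (n / d₁) ∧
      S = hermiteSpan (d₁ : ZMod n) d₂ c := by
  obtain ⟨d₁, hd₁, h₁⟩ := ZMod.exists_mem_iff_natCast_dvd (S.map (LinearMap.fst _ _ _))
  obtain ⟨d₂, hd₂, h₂⟩ := ZMod.exists_mem_iff_natCast_dvd (S.comap (LinearMap.inr _ _ _))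
  simp only [Submodule.mem_map, LinearMap.fst_apply, Submodule.mem_comap,
    LinearMap.inr_apply] at h₁ h₂
  obtain ⟨⟨_, z⟩, hzS, rfl⟩ := (h₁ d₁).2 dvd_rfl
  set c := z.val % d₂
  have hz : z = c + d₂ * (z.val / d₂ : ℕ) := by
    conv_lhs => rw [← ZMod.natCast_zmod_val z, ← Nat.mod_add_div z.val d₂]
    push_cast; rfl
  have hc : ((d₁ : ZMod n), (c : ZMod n)) ∈ S := by
    have := S.sub_mem hzS ((h₂ _).2 (dvd_mul_right (d₂ : ZMod n) (z.val / d₂ : ℕ)))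
    rw [Prod.mk_sub_mk, sub_zero] at this
    convert this using 2
    rw [eq_sub_iff_add_eq, ← hz]
  have hcond : d₂ ∣ c * (n / d₁) := by
    have := S.smul_mem ((n / d₁ : ℕ) : ZMod n) hc
    rw [Prod.smul_mk, smul_eq_mul, smul_eq_mul, ← Nat.cast_mul, Nat.div_mul_cancel hd₁,
      ZMod.natCast_self, ← Nat.cast_mul, mul_comm] at this
    exact (ZMod.natCast_dvd_natCast_iff hd₂ _).1 ((h₂ _).1 this)
  refine ⟨d₁, d₂, c, hd₁, hd₂, Nat.mod_lt _ (Nat.pos_of_dvd_of_pos hd₂ (NeZero.pos n)), hcond,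
    le_antisymm (fun x hx => ?_) ?_⟩
  · obtain ⟨s, hs⟩ := (h₁ x.1).1 ⟨x, hx, rfl⟩
    obtain ⟨t, ht⟩ := (h₂ (x.2 - s * c)).1 <| by
      convert S.sub_mem hx (S.smul_mem s hc) using 1
      ext <;> simp [hs, mul_comm]
    exact mem_hermiteSpan.2 ⟨s, t, Prod.ext (by rw [hs, mul_comm]) (by linear_combination ht)⟩
  · rw [hermiteSpan, Submodule.span_le, Set.insert_subset_iff, Set.singleton_subset_iff]
    exact ⟨hc, (h₂ _).2 dvd_rfl⟩

theorem hermiteSpan_inj {d₁ d₂ c d₁' d₂' c' : ℕ} (hd₁ : d₁ ∣ n) (hd₂ : d₂ ∣ n) (hc : c < d₂)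
    (h : d₂ ∣ c * (n / d₁)) (hd₁' : d₁' ∣ n) (hd₂' : d₂' ∣ n) (hc' : c' < d₂')
    (h' : d₂' ∣ c' * (n / d₁'))
    (heq : hermiteSpan (d₁ : ZMod n) d₂ c = hermiteSpan (d₁' : ZMod n) d₂' c') :
    d₁ = d₁' ∧ d₂ = d₂' ∧ c = c' := by
  obtain rfl : d₁ = d₁' := ZMod.eq_of_forall_natCast_dvd_iff hd₁ hd₁' fun x => by
    rw [← exists_mem_hermiteSpan_iff_dvd, ← exists_mem_hermiteSpan_iff_dvd, heq]
  obtain rfl : d₂ = d₂' := ZMod.eq_of_forall_natCast_dvd_iff hd₂ hd₂' fun y => by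
    rw [← mem_hermiteSpan_zero_iff hd₁ h, ← mem_hermiteSpan_zero_iff hd₁ h', heq]
  refine ⟨rfl, rfl, ?_⟩
  have hmem : ((d₁ : ZMod n), (c : ZMod n)) ∈ hermiteSpan (d₁ : ZMod n) d₂ c' :=
    heq ▸ Submodule.subset_span (Set.mem_insert _ _)
  have hsub := Submodule.sub_mem _ hmem (Submodule.subset_span (Set.mem_insert _ _))
  rw [Prod.mk_sub_mk, sub_self, mem_hermiteSpan_zero_iff hd₁ h',
    show (c : ZMod n) - c' = ((c - c' : ℤ) : ZMod n) by push_cast; rfl,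
    ZMod.natCast_dvd_intCast_iff hd₂] at hsub
  exact (Nat.modEq_iff_dvd.2 hsub).symm.eq_of_lt_of_lt hc hc'

theorem hermiteSpan_mul_mem_iff {d₁ d₂ c : ℕ} (hd₁ : d₁ ∣ n) (hd₂ : d₂ ∣ n)
    (h : d₂ ∣ c * (n / d₁)) :
    (∀ x ∈ hermiteSpan (d₁ : ZMod n) d₂ c, ∀ y ∈ hermiteSpan (d₁ : ZMod n) d₂ c,
      x * y ∈ hermiteSpan (d₁ : ZMod n) d₂ c) ↔ (d₂ : ℤ) ∣ c * (c - d₁) := by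
  have hcast : ((c * (c - d₁) : ℤ) : ZMod n) = (c : ZMod n) * (c - d₁) := by push_cast; rfl
  constructor
  · intro hmul
    have hgen : ((d₁ : ZMod n), (c : ZMod n)) ∈ hermiteSpan (d₁ : ZMod n) d₂ c :=
      Submodule.subset_span (Set.mem_insert _ _)
    have := Submodule.sub_mem _ (hmul _ hgen _ hgen) (Submodule.smul_mem _ (d₁ : ZMod n) hgen)
    rw [Prod.smul_mk, smul_eq_mul, smul_eq_mul, Prod.mk_mul_mk, Prod.mk_sub_mk, sub_self,
      mem_hermiteSpan_zero_iff hd₁ h, mul_comm (d₁ : ZMod n), ← mul_sub, ← hcast,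
      ZMod.natCast_dvd_intCast_iff hd₂] at this
    exact this
  · intro hdvd
    refine fun x hx y hy => hermiteSpan_mul_mem ?_ hx hy
    rwa [← hcast, ZMod.natCast_dvd_intCast_iff hd₂]

theorem card_subring_submodules_eq_sum :
    Nat.card {S : Submodule (ZMod n) (ZMod n × ZMod n) // ∀ x ∈ S, ∀ y ∈ S, x * y ∈ S} =
      ∑ d₂ ∈ n.divisors, ∑ d₁ ∈ n.divisors, numSubringHNF n d₁ d₂ := by
  let D := (n.divisors ×ˢ n.divisors).sigma fun d => {c ∈ range d.1 | IsSubringHNF n d.2 d.1 c}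
  have hD : ∀ x, x ∈ D ↔
      x.1.2 ∣ n ∧ x.1.1 ∣ n ∧ x.2 < x.1.1 ∧ IsSubringHNF n x.1.2 x.1.1 x.2 := by
    simp only [D, mem_sigma, mem_product, Nat.mem_divisors, mem_filter, mem_range]
    have := NeZero.ne n
    tauto
  let F : D → {S : Submodule (ZMod n) (ZMod n × ZMod n) // ∀ x ∈ S, ∀ y ∈ S, x * y ∈ S} :=
    fun x =>
      have hx := (hD x).1 x.2
      ⟨hermiteSpan (x.1.1.2 : ZMod n) x.1.1.1 x.1.2,
        (hermiteSpan_mul_mem_iff hx.1 hx.2.1 hx.2.2.2.1).2 hx.2.2.2.2⟩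
  have hF : F.Bijective := by
    refine ⟨fun ⟨⟨⟨d₂, d₁⟩, c⟩, hx⟩ ⟨⟨⟨d₂', d₁'⟩, c'⟩, hx'⟩ heq => ?_, fun ⟨S, hS⟩ => ?_⟩
    · obtain ⟨hd₁, hd₂, hc, h, -⟩ := (hD _).1 hx
      obtain ⟨hd₁', hd₂', hc', h', -⟩ := (hD _).1 hx'
      obtain ⟨rfl, rfl, rfl⟩ :=
        hermiteSpan_inj hd₁ hd₂ hc h hd₁' hd₂' hc' h' (congrArg Subtype.val heq)
      rfl
    · obtain ⟨d₁, d₂, c, hd₁, hd₂, hc, h, rfl⟩ := exists_eq_hermiteSpan S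
      exact ⟨⟨⟨(d₂, d₁), c⟩, (hD _).2
        ⟨hd₁, hd₂, hc, h, (hermiteSpan_mul_mem_iff hd₁ hd₂ h).1 hS⟩⟩, rfl⟩
  rw [← Nat.card_eq_of_bijective F hF, Nat.card_eq_finsetCard, card_sigma, sum_product]
  rfl

theorem card_subrings_zmod_prod :
    Nat.card {S : AddSubgroup (ZMod n × ZMod n) // ∀ x ∈ S, ∀ y ∈ S, x * y ∈ S} =
      ∑ d₂ ∈ n.divisors, ∑ d₁ ∈ n.divisors, numSubringHNF n d₁ d₂ := by
  rw [← card_subring_submodules_eq_sum]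
  exact Nat.card_congr ((AddSubgroup.toZModSubmodule n).toEquiv.subtypeEquiv fun _ => Iff.rfl)

end HermiteNormalForm

theorem isSubringHNF_zero (n d₁ d₂ : ℕ) : IsSubringHNF n d₁ d₂ 0 := by
  simp [IsSubringHNF]

theorem isSubringHNF_periodic (n d₁ d₂ : ℕ) : Function.Periodic (IsSubringHNF n d₁ d₂) d₂ := by
  intro c
  have h : ((c + d₂ : ℕ) : ℤ) * ((c + d₂ : ℕ) - d₁) = c * (c - d₁) + d₂ * (2 * c + d₂ - d₁) := by
    push_cast; ring
  simp only [IsSubringHNF, add_mul, h, Nat.dvd_add_left (dvd_mul_right d₂ _),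
    dvd_add_left (dvd_mul_right (d₂ : ℤ) _)]

section PrimePower

variable {p : ℕ}

theorem isSubringHNF_pow_iff (hp : p ≠ 0) {k a b c : ℕ} (ha : a ≤ k) :
    IsSubringHNF (p ^ k) (p ^ a) (p ^ b) c ↔
      p ^ b ∣ c * p ^ (k - a) ∧ (p : ℤ) ^ b ∣ c * (c - (p : ℤ) ^ a) := by
  rw [IsSubringHNF, Nat.pow_div ha (Nat.pos_of_ne_zero hp)]
  push_cast
  rfl

theorem dvd_of_isSubringHNF_pow (hp : p.Prime) {k a b c : ℕ} (ha : a ≠ 0) (hb : b ≠ 0)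
    (h : IsSubringHNF (p ^ k) (p ^ a) (p ^ b) c) : p ∣ c := by
  have hpc : (p : ℤ) ∣ c * (c - (p : ℤ) ^ a) := by
    have := h.2
    push_cast at this
    exact (dvd_pow_self (p : ℤ) hb).trans this
  rcases (Nat.prime_iff_prime_int.1 hp).dvd_or_dvd hpc with hc | hc
  · exact_mod_cast hc
  · have := hc.add (dvd_pow_self (p : ℤ) ha)
    rw [sub_add_cancel] at this
    exact_mod_cast this

theorem isSubringHNF_pow_add_two_iff (hp : p ≠ 0) {k a b d : ℕ} (ha : a ≤ k) :
    IsSubringHNF (p ^ (k + 2)) (p ^ (a + 1)) (p ^ (b + 2)) (p * d) ↔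
      IsSubringHNF (p ^ k) (p ^ a) (p ^ b) d := by
  rw [isSubringHNF_pow_iff hp (by omega), isSubringHNF_pow_iff hp ha,
    show k + 2 - (a + 1) = k - a + 1 by omega]
  have hp₂ : p ^ 2 ≠ 0 := pow_ne_zero 2 hp
  have hp₂' : (p : ℤ) ^ 2 ≠ 0 := pow_ne_zero 2 (by exact_mod_cast hp)
  apply and_congr
  · rw [show p * d * p ^ (k - a + 1) = p ^ 2 * (d * p ^ (k - a)) by ring, pow_add,
      mul_comm, mul_dvd_mul_iff_left hp₂]
  · rw [show ((p * d : ℕ) : ℤ) * ((p * d : ℕ) - (p : ℤ) ^ (a + 1)) =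
        (p : ℤ) ^ 2 * (d * (d - (p : ℤ) ^ a)) by push_cast; ring, pow_add,
      mul_comm, mul_dvd_mul_iff_left hp₂']

theorem numSubringHNF_eq_one (hp : p ≠ 0) {k a b : ℕ}
    (h : ∀ c < p ^ b, IsSubringHNF (p ^ k) (p ^ a) (p ^ b) c → c = 0) :
    numSubringHNF (p ^ k) (p ^ a) (p ^ b) = 1 := by
  rw [numSubringHNF, card_eq_one]
  refine ⟨0, ext fun c => ?_⟩
  simp only [mem_filter, mem_range, mem_singleton]
  refine ⟨fun hc => h c hc.1 hc.2, ?_⟩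
  rintro rfl
  exact ⟨pow_pos (Nat.pos_of_ne_zero hp) b, isSubringHNF_zero _ _ _⟩

theorem numSubringHNF_pow_zero_right (hp : p ≠ 0) (k a : ℕ) :
    numSubringHNF (p ^ k) (p ^ a) (p ^ 0) = 1 :=
  numSubringHNF_eq_one hp fun c hc _ => by simpa using hc

theorem numSubringHNF_pow_self (hp : p ≠ 0) (k b : ℕ) :
    numSubringHNF (p ^ k) (p ^ k) (p ^ b) = 1 :=
  numSubringHNF_eq_one hp fun c hc h => by
    rw [isSubringHNF_pow_iff hp le_rfl, Nat.sub_self, pow_zero, mul_one] at h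
    exact Nat.eq_zero_of_dvd_of_lt h.1 hc

theorem numSubringHNF_pow_one_right (hp : p.Prime) (k : ℕ) {a : ℕ} (ha : a ≠ 0) :
    numSubringHNF (p ^ k) (p ^ a) (p ^ 1) = 1 :=
  numSubringHNF_eq_one hp.ne_zero fun c hc h =>
    Nat.eq_zero_of_dvd_of_lt (dvd_of_isSubringHNF_pow hp ha one_ne_zero h) (by simpa using hc)

theorem eq_zero_or_one_of_pow_dvd_mul_sub_one (hp : p.Prime) {b c : ℕ} (hc : c < p ^ b)
    (h : (p : ℤ) ^ b ∣ c * (c - 1)) : c = 0 ∨ c = 1 := by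
  have hpi := Nat.prime_iff_prime_int.1 hp
  have hc' : (c : ℤ) < (p : ℤ) ^ b := by exact_mod_cast hc
  by_cases hpc : (p : ℤ) ∣ c
  · have hnd : ¬(p : ℤ) ∣ c - 1 := fun h' => hpi.not_dvd_one (by simpa using dvd_sub hpc h')
    left
    exact_mod_cast Int.eq_zero_of_dvd_of_nonneg_of_lt (by positivity) hc'
      (hpi.pow_dvd_of_dvd_mul_right b hnd h)
  · rcases Nat.eq_zero_or_pos c with h0 | h0
    · exact Or.inl h0
    · have := Int.eq_zero_of_dvd_of_nonneg_of_lt (by omega) (by omega)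
        (hpi.pow_dvd_of_dvd_mul_left b hpc h)
      omega

theorem numSubringHNF_pow_zero_left (hp : p.Prime) {k b : ℕ} (hb : b ≠ 0) (hbk : b ≤ k) :
    numSubringHNF (p ^ k) (p ^ 0) (p ^ b) = 2 := by
  have h1 : 1 < p ^ b := Nat.one_lt_pow hb hp.one_lt
  have hfilter : {c ∈ range (p ^ b) | IsSubringHNF (p ^ k) (p ^ 0) (p ^ b) c} = {0, 1} := by
    ext c
    rw [mem_filter, mem_range, isSubringHNF_pow_iff hp.ne_zero (Nat.zero_le k), pow_zero,
      Nat.sub_zero, mem_insert, mem_singleton]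
    constructor
    · rintro ⟨hc, -, h⟩
      exact eq_zero_or_one_of_pow_dvd_mul_sub_one hp hc h
    · rintro (rfl | rfl)
      · simp [h1.trans' zero_lt_one]
      · simpa [h1] using pow_dvd_pow p hbk
  rw [numSubringHNF, hfilter]
  rfl

theorem numSubringHNF_pow_add_two (hp : p.Prime) {k a : ℕ} (b : ℕ) (ha : a ≤ k) :
    numSubringHNF (p ^ (k + 2)) (p ^ (a + 1)) (p ^ (b + 2)) =
      p * numSubringHNF (p ^ k) (p ^ a) (p ^ b) := by
  have hmap : {c ∈ range (p ^ (b + 2)) | IsSubringHNF (p ^ (k + 2)) (p ^ (a + 1)) (p ^ (b + 2)) c}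
      = {d ∈ range (p ^ (b + 1)) | IsSubringHNF (p ^ k) (p ^ a) (p ^ b) d}.map
          ⟨(p * ·), mul_right_injective₀ hp.ne_zero⟩ := by
    ext c
    simp only [mem_filter, mem_range, mem_map, Function.Embedding.coeFn_mk]
    constructor
    · rintro ⟨hc, h⟩
      obtain ⟨d, rfl⟩ := dvd_of_isSubringHNF_pow hp (Nat.succ_ne_zero a) (Nat.succ_ne_zero _) h
      refine ⟨d, ⟨?_, (isSubringHNF_pow_add_two_iff hp.ne_zero ha).1 h⟩, rfl⟩
      rw [pow_succ' p (b + 1)] at hc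
      exact Nat.lt_of_mul_lt_mul_left hc
    · rintro ⟨d, ⟨hd, h⟩, rfl⟩
      refine ⟨?_, (isSubringHNF_pow_add_two_iff hp.ne_zero ha).2 h⟩
      rw [pow_succ' p (b + 1)]
      exact Nat.mul_lt_mul_of_pos_left hd hp.pos
  rw [numSubringHNF, hmap, card_map, ← Nat.count_eq_card_filter_range, pow_succ',
    Nat.count_mul_of_periodic (isSubringHNF_periodic _ _ _), Nat.count_eq_card_filter_range,
    numSubringHNF]

theorem sum_numSubringHNF_pow_one (hp : p.Prime) :
    ∑ b ∈ range 2, ∑ a ∈ range 2, numSubringHNF (p ^ 1) (p ^ a) (p ^ b) = 5 := by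
  simp only [sum_range_succ, sum_range_zero, zero_add,
    numSubringHNF_pow_zero_right hp.ne_zero, numSubringHNF_pow_self hp.ne_zero,
    numSubringHNF_pow_zero_left hp one_ne_zero le_rfl, Nat.reduceAdd]

theorem sum_numSubringHNF_pow_add_two (hp : p.Prime) (k : ℕ) :
    ∑ b ∈ range (k + 3), ∑ a ∈ range (k + 3), numSubringHNF (p ^ (k + 2)) (p ^ a) (p ^ b) =
      p * ∑ b ∈ range (k + 1), ∑ a ∈ range (k + 1), numSubringHNF (p ^ k) (p ^ a) (p ^ b) +
        5 * (k + 2) := by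
  have row₀ : ∑ a ∈ range (k + 3), numSubringHNF (p ^ (k + 2)) (p ^ a) (p ^ 0) = k + 3 := by
    rw [sum_congr rfl fun a _ => numSubringHNF_pow_zero_right hp.ne_zero _ a, sum_const,
      card_range, smul_eq_mul, mul_one]
  have row₁ : ∑ a ∈ range (k + 3), numSubringHNF (p ^ (k + 2)) (p ^ a) (p ^ 1) = k + 4 := by
    rw [sum_range_succ', numSubringHNF_pow_zero_left hp one_ne_zero (by omega),
      sum_congr rfl fun a _ => numSubringHNF_pow_one_right hp _ (Nat.succ_ne_zero a), sum_const,
      card_range, smul_eq_mul, mul_one]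
  have row : ∀ b ∈ range (k + 1),
      ∑ a ∈ range (k + 3), numSubringHNF (p ^ (k + 2)) (p ^ a) (p ^ (b + 2)) =
        p * ∑ a ∈ range (k + 1), numSubringHNF (p ^ k) (p ^ a) (p ^ b) + 3 := by
    intro b hb
    rw [mem_range] at hb
    rw [sum_range_succ, sum_range_succ', numSubringHNF_pow_self hp.ne_zero,
      numSubringHNF_pow_zero_left hp (by omega) (by omega), mul_sum,
      sum_congr rfl fun a ha => numSubringHNF_pow_add_two hp b (by rw [mem_range] at ha; omega)]
  rw [sum_range_succ' _ (k + 2), sum_range_succ' _ (k + 1), sum_congr rfl row, row₀, row₁,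
    sum_add_distrib, ← mul_sum, sum_const, card_range, smul_eq_mul]
  ring

end PrimePower

theorem eq_five_mul_sum_of_recurrence {p : ℕ} {T : ℕ → ℕ} (h₁ : T 1 = 5)
    (h : ∀ k, T (k + 2) = p * T k + 5 * (k + 2)) {γ : ℕ} (hγ : 1 ≤ γ) :
    T (2 * γ - 1) = 5 * ∑ j ∈ Icc 1 γ, (2 * j - 1) * p ^ (γ - j) := by
  induction γ, hγ using Nat.le_induction with
  | base => simpa using h₁
  | succ γ hγ ih =>
    have hsum : ∑ j ∈ Icc 1 γ, (2 * j - 1) * p ^ (γ + 1 - j) =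
        p * ∑ j ∈ Icc 1 γ, (2 * j - 1) * p ^ (γ - j) := by
      rw [mul_sum]
      refine sum_congr rfl fun j hj => ?_
      rw [show γ + 1 - j = γ - j + 1 by rw [mem_Icc] at hj; omega]
      ring
    rw [show 2 * (γ + 1) - 1 = 2 * γ - 1 + 2 by omega, h, ih, sum_Icc_succ_top (by omega), hsum,
      Nat.sub_self, pow_zero, show 2 * (γ + 1) - 1 = 2 * γ - 1 + 2 by omega]
    ring

theorem count_subrings_odd_prime_power (p : ℕ) (hp : p.Prime) (γ : ℕ) (hγ : 1 ≤ γ) :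
    Nat.card {S : AddSubgroup (ZMod (p ^ (2 * γ - 1)) × ZMod (p ^ (2 * γ - 1))) //
        ∀ x ∈ S, ∀ y ∈ S, x * y ∈ S}
      = 5 * ∑ j ∈ Finset.Icc 1 γ, (2 * j - 1) * p ^ (γ - j) := by
  have : NeZero (p ^ (2 * γ - 1)) := ⟨pow_ne_zero _ hp.ne_zero⟩
  rw [card_subrings_zmod_prod]
  simp only [Nat.sum_divisors_prime_pow hp]
  exact eq_five_mul_sum_of_recurrence
    (T := fun k => ∑ b ∈ range (k + 1), ∑ a ∈ range (k + 1), numSubringHNF (p ^ k) (p ^ a) (p ^ b))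
    (sum_numSubringHNF_pow_one hp)
    (sum_numSubringHNF_pow_add_two hp) hγ
end

section
/- For every positive integers m and n, τ(gcd(m, n)) ≤ τ(m·n) ≤ τ(m)·τ(n) ≤ N^{(s)}(m, n), where N^{(s)}(m, n) denotes the number of subrings of the ring ℤ_m × ℤ_n. -/
lemma zmult_mul_closed {k : ℕ} (a : ℕ) {x y : ZMod k}
    (hx : x ∈ AddSubgroup.zmultiples ((a : ZMod k)))
    (hy : y ∈ AddSubgroup.zmultiples ((a : ZMod k))) :
    x * y ∈ AddSubgroup.zmultiples ((a : ZMod k)) := by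
  obtain ⟨i, rfl⟩ := hx
  obtain ⟨j, rfl⟩ := hy
  refine ⟨i * j * (a : ℤ), ?_⟩
  simp only [zsmul_eq_mul]
  push_cast
  ring

lemma card_zmult {k a : ℕ} (hk : k ≠ 0) (ha : a ∣ k) :
    Nat.card (AddSubgroup.zmultiples ((a : ZMod k))) = k / a := by
  rw [Nat.card_zmultiples, ZMod.addOrderOf_coe a hk, Nat.gcd_comm,
    Nat.gcd_eq_left ha]

lemma zmult_inj {k : ℕ} (hk : k ≠ 0) {a b : ℕ} (ha : a ∣ k) (hb : b ∣ k)
    (h : AddSubgroup.zmultiples ((a : ZMod k)) = AddSubgroup.zmultiples ((b : ZMod k))) :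
    a = b := by
  have hcard : k / a = k / b := by
    rw [← card_zmult hk ha, ← card_zmult hk hb, h]
  have h1 : a = k / (k / a) := (Nat.div_div_self ha hk).symm
  rw [h1, hcard, Nat.div_div_self hb hk]

theorem tau_chain_le_subring_count (m n : ℕ) (hm : 0 < m) (hn : 0 < n) :
    (Nat.gcd m n).divisors.card ≤ (m * n).divisors.card ∧
    (m * n).divisors.card ≤ m.divisors.card * n.divisors.card ∧
    m.divisors.card * n.divisors.card ≤
      Nat.card {S : AddSubgroup (ZMod m × ZMod n) // ∀ x ∈ S, ∀ y ∈ S, x * y ∈ S} := by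
  haveI : NeZero m := ⟨hm.ne'⟩
  haveI : NeZero n := ⟨hn.ne'⟩
  have hmn : m * n ≠ 0 := Nat.mul_ne_zero hm.ne' hn.ne'
  refine ⟨?_, ?_, ?_⟩
  · exact Finset.card_le_card (Nat.divisors_subset_of_dvd hmn
      ((Nat.gcd_dvd_left m n).trans (dvd_mul_right m n)))
  · have hsub : (m * n).divisors ⊆
        (m.divisors ×ˢ n.divisors).image (fun p => p.1 * p.2) := by
      intro d hd
      rw [Nat.mem_divisors] at hd
      obtain ⟨a, b, ha, hb, hab⟩ := Nat.dvd_mul.mp hd.1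
      refine Finset.mem_image.mpr ⟨(a, b), ?_, hab⟩
      exact Finset.mem_product.mpr ⟨Nat.mem_divisors.mpr ⟨ha, hm.ne'⟩,
        Nat.mem_divisors.mpr ⟨hb, hn.ne'⟩⟩
    calc (m * n).divisors.card ≤ _ := Finset.card_le_card hsub
      _ ≤ (m.divisors ×ˢ n.divisors).card := Finset.card_image_le
      _ = m.divisors.card * n.divisors.card := Finset.card_product _ _
  · set T := {S : AddSubgroup (ZMod m × ZMod n) // ∀ x ∈ S, ∀ y ∈ S, x * y ∈ S}
    have hfin : Finite T := by
      have : Finite (AddSubgroup (ZMod m × ZMod n)) :=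
        Finite.of_injective (fun S : AddSubgroup (ZMod m × ZMod n) => (S : Set (ZMod m × ZMod n)))
          (fun S₁ S₂ h => SetLike.ext' h)
      exact Subtype.finite
    let f : (m.divisors ×ˢ n.divisors : Finset (ℕ × ℕ)) → T := fun p =>
      ⟨(AddSubgroup.zmultiples ((p.1.1 : ZMod m))).prod
         (AddSubgroup.zmultiples ((p.1.2 : ZMod n))), by
        intro x hx y hy
        rw [AddSubgroup.mem_prod] at hx hy ⊢
        exact ⟨zmult_mul_closed _ hx.1 hy.1, zmult_mul_closed _ hx.2 hy.2⟩⟩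
    have hf : Function.Injective f := by
      rintro ⟨⟨a, b⟩, hab⟩ ⟨⟨a', b'⟩, hab'⟩ h
      rw [Finset.mem_product, Nat.mem_divisors, Nat.mem_divisors] at hab hab'
      have h' := congrArg (fun s : T => s.1) h
      simp only [f] at h'
      have h1 : AddSubgroup.zmultiples ((a : ZMod m)) = AddSubgroup.zmultiples ((a' : ZMod m)) := by
        ext x
        constructor
        · intro hx
          have : (x, (0 : ZMod n)) ∈ (AddSubgroup.zmultiples ((a : ZMod m))).prod
              (AddSubgroup.zmultiples ((b : ZMod n))) :=
            AddSubgroup.mem_prod.mpr ⟨hx, zero_mem _⟩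
          rw [h'] at this
          exact (AddSubgroup.mem_prod.mp this).1
        · intro hx
          have : (x, (0 : ZMod n)) ∈ (AddSubgroup.zmultiples ((a' : ZMod m))).prod
              (AddSubgroup.zmultiples ((b' : ZMod n))) :=
            AddSubgroup.mem_prod.mpr ⟨hx, zero_mem _⟩
          rw [← h'] at this
          exact (AddSubgroup.mem_prod.mp this).1
      have h2 : AddSubgroup.zmultiples ((b : ZMod n)) = AddSubgroup.zmultiples ((b' : ZMod n)) := by
        ext x
        constructor
        · intro hx
          have : ((0 : ZMod m), x) ∈ (AddSubgroup.zmultiples ((a : ZMod m))).prod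
              (AddSubgroup.zmultiples ((b : ZMod n))) :=
            AddSubgroup.mem_prod.mpr ⟨zero_mem _, hx⟩
          rw [h'] at this
          exact (AddSubgroup.mem_prod.mp this).2
        · intro hx
          have : ((0 : ZMod m), x) ∈ (AddSubgroup.zmultiples ((a' : ZMod m))).prod
              (AddSubgroup.zmultiples ((b' : ZMod n))) :=
            AddSubgroup.mem_prod.mpr ⟨zero_mem _, hx⟩
          rw [← h'] at this
          exact (AddSubgroup.mem_prod.mp this).2
      have ea := zmult_inj hm.ne' hab.1.1 hab'.1.1 h1
      have eb := zmult_inj hn.ne' hab.2.1 hab'.2.1 h2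
      exact Subtype.ext (Prod.ext ea eb)
    calc m.divisors.card * n.divisors.card
        = (m.divisors ×ˢ n.divisors).card := (Finset.card_product _ _).symm
      _ = Nat.card (m.divisors ×ˢ n.divisors : Finset (ℕ × ℕ)) := by
          rw [Nat.card_eq_fintype_card, Fintype.card_coe]
      _ ≤ Nat.card T := Nat.card_le_card_of_injective f hf
end
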